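/- arXiv:1411.6818 — 10 statements merged into one kernel-verified Lean document; each statement's English description precedes it below -/
import Mathlib

section
/- Every instance of the relaxed unsplittable stable allocation problem admits at least one relaxed unsplit stable assignment. -/
open Finset

/-- An instance of the (relaxed) unsplittable stable allocation problem:
a finite bipartite graph between jobs `J` and machines `M` given by the
adjacency relation `adj`, sizes `qJ` and capacities `qM`, strict preferences
encoded by injective rank functions (smaller rank = more preferred), and a
dummy machine `md` adjacent to every job, ranked last by every job, whose
capacity exceeds the total size of all jobs. -/
structure Inst (J M : Type) [Fintype J] [DecidableEq J] [Fintype M] [DecidableEq M] where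
  adj : J → M → Prop
  qJ : J → ℝ
  qM : M → ℝ
  qJ_pos : ∀ j, 0 < qJ j
  qM_pos : ∀ m, 0 < qM m
  rankJ : J → M → ℕ
  rankM : M → J → ℕ
  rankJ_inj : ∀ j m m', adj j m → adj j m' → rankJ j m = rankJ j m' → m = m'
  rankM_inj : ∀ m j j', adj j m → adj j' m → rankM m j = rankM m j' → j = j'
  md : M
  md_adj : ∀ j, adj j md
  md_last : ∀ j m, adj j m → m ≠ md → rankJ j m < rankJ j md
  md_cap : (∑ j : J, qJ j) < qM md

variable {J M : Type} [Fintype J] [DecidableEq J] [Fintype M] [DecidableEq M]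

/-- `x(m)`: the total size assigned to machine `m` by the unsplit assignment
`a : J → M` (each job is assigned in its entirety to exactly one machine). -/
def load (I : Inst J M) (a : J → M) (m : M) : ℝ :=
  ∑ j ∈ Finset.univ.filter (fun j => a j = m), I.qJ j

/-- `a` is a valid unsplit assignment: every job is assigned along an edge. -/
def IsUnsplit (I : Inst J M) (a : J → M) : Prop :=
  ∀ j, I.adj j (a j)

/-- The relaxed capacity condition: for every machine `m` with at least one
assigned job, removing the least preferred job `j` assigned to `m` (largest
rank among assigned jobs) leaves `m` strictly below its capacity. -/
def IsRelaxed (I : Inst J M) (a : J → M) : Prop :=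
  ∀ m j, a j = m → (∀ j', a j' = m → I.rankM m j' ≤ I.rankM m j) →
    load I a m - I.qJ j < I.qM m

/-- Edge `jm` (with `a j ≠ m`) blocks `a`: `j` prefers `m` to its assigned
machine, and the total size of jobs assigned to `m` that `m` prefers to `j`
is below `m`'s capacity. -/
def Blocks (I : Inst J M) (a : J → M) (j : J) (m : M) : Prop :=
  I.adj j m ∧ a j ≠ m ∧ I.rankJ j m < I.rankJ j (a j) ∧
  (∑ j' ∈ Finset.univ.filter (fun j' => a j' = m ∧ I.rankM m j' < I.rankM m j), I.qJ j')
    < I.qM m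

/-- A relaxed unsplit stable assignment. -/
def IsStable (I : Inst J M) (a : J → M) : Prop :=
  IsUnsplit I a ∧ IsRelaxed I a ∧ ∀ j m, ¬ Blocks I a j m

/-- Machine `m` weakly prefers `a1` to `a2` (lexicographic order): either the
sets of jobs assigned to `m` coincide, or the best job (in `m`'s preference)
among the jobs assigned to `m` in exactly one of the two assignments is
assigned to `m` in `a1`. -/
def MPrefers (I : Inst J M) (m : M) (a1 a2 : J → M) : Prop :=
  (∀ j, a1 j = m ↔ a2 j = m) ∨
  ∃ j, a1 j = m ∧ a2 j ≠ m ∧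
    ∀ j', ((a1 j' = m ∧ a2 j' ≠ m) ∨ (a2 j' = m ∧ a1 j' ≠ m)) →
      I.rankM m j ≤ I.rankM m j'

/-- Job `j` weakly prefers its machine in `a1` to its machine in `a2`. -/
def JPrefers (I : Inst J M) (j : J) (a1 a2 : J → M) : Prop :=
  I.rankJ j (a1 j) ≤ I.rankJ j (a2 j)

/-- A machine-optimal relaxed unsplit stable assignment. -/
def MOptimal (I : Inst J M) (a : J → M) : Prop :=
  IsStable I a ∧ ∀ a', IsStable I a' → ∀ m, MPrefers I m a a'

/-- A job-optimal relaxed unsplit stable assignment. -/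
def JOptimal (I : Inst J M) (a : J → M) : Prop :=
  IsStable I a ∧ ∀ a', IsStable I a' → ∀ j, JPrefers I j a a'

/-- The size `|x|` of an unsplit assignment: total size of the jobs assigned
to a real (non-dummy) machine. -/
def totalSize (I : Inst J M) (a : J → M) : ℝ :=
  ∑ j ∈ Finset.univ.filter (fun j => a j ≠ I.md), I.qJ j

open scoped Classical in
/-- The machines still available to job `j` given rejection sets `s`. -/
noncomputable def avail (I : Inst J M) (s : J → Finset M) (j : J) : Finset M :=
  Finset.univ.filter (fun m => I.adj j m ∧ m ∉ s j)

lemma mem_avail {I : Inst J M} {s : J → Finset M} {j : J} {m : M} :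
    m ∈ avail I s j ↔ I.adj j m ∧ m ∉ s j := by
  simp [avail]

/-- Tentative assignment: each job goes to its most preferred available machine. -/
noncomputable def assign (I : Inst J M) (s : J → Finset M) (j : J) : M :=
  if h : (avail I s j).Nonempty then
    (Finset.exists_min_image (avail I s j) (I.rankJ j) h).choose
  else I.md

lemma avail_nonempty {I : Inst J M} {s : J → Finset M} {j : J} (hmd : I.md ∉ s j) :
    (avail I s j).Nonempty := ⟨I.md, mem_avail.mpr ⟨I.md_adj j, hmd⟩⟩

lemma assign_mem {I : Inst J M} {s : J → Finset M} {j : J} (hmd : I.md ∉ s j) :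
    assign I s j ∈ avail I s j := by
  rw [assign, dif_pos (avail_nonempty hmd)]
  exact (Finset.exists_min_image (avail I s j) (I.rankJ j) (avail_nonempty hmd)).choose_spec.1

lemma assign_min {I : Inst J M} {s : J → Finset M} {j : J} (hmd : I.md ∉ s j)
    {m : M} (hm : m ∈ avail I s j) : I.rankJ j (assign I s j) ≤ I.rankJ j m := by
  rw [assign, dif_pos (avail_nonempty hmd)]
  exact (Finset.exists_min_image (avail I s j) (I.rankJ j) (avail_nonempty hmd)).choose_spec.2 m hm

lemma assign_eq_of_eq (I : Inst J M) {s₁ s₂ : J → Finset M} {j : J}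
    (h : s₁ j = s₂ j) (hmd : I.md ∉ s₁ j) : assign I s₁ j = assign I s₂ j := by
  have hav : avail I s₁ j = avail I s₂ j := by unfold avail; rw [h]
  have hmd₂ : I.md ∉ s₂ j := h ▸ hmd
  have h₁ := assign_mem (I := I) hmd
  have h₂ := assign_mem (I := I) hmd₂
  have l₁ := assign_min hmd (m := assign I s₂ j) (by rw [hav]; exact h₂)
  have l₂ := assign_min hmd₂ (m := assign I s₁ j) (by rw [← hav]; exact h₁)
  exact I.rankJ_inj j _ _ (mem_avail.mp h₁).1 (mem_avail.mp h₂).1 (le_antisymm l₁ l₂)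

/-- Invariant: rejections happen only along non-dummy edges, and whenever `m`
rejected `j`, the jobs currently at `m` that `m` prefers to `j` fill `m`'s capacity. -/
def DAInv (I : Inst J M) (s : J → Finset M) : Prop :=
  ∀ j m, m ∈ s j → I.adj j m ∧ m ≠ I.md ∧
    I.qM m ≤ ∑ j' ∈ Finset.univ.filter
      (fun j' => assign I s j' = m ∧ I.rankM m j' < I.rankM m j), I.qJ j'

lemma stable_of_relaxed {I : Inst J M} {s : J → Finset M} (hInv : DAInv I s)
    (hrel : IsRelaxed I (assign I s)) : IsStable I (assign I s) := by
  have hmd : ∀ j, I.md ∉ s j := fun j hm => (hInv j _ hm).2.1 rfl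
  refine ⟨fun j => (mem_avail.mp (assign_mem (hmd j))).1, hrel, ?_⟩
  rintro j m ⟨hadj, hne, hpref, hsum⟩
  have hms : m ∈ s j := by
    by_contra hms
    have := assign_min (hmd j) (mem_avail.mpr ⟨hadj, hms⟩)
    omega
  have := (hInv j m hms).2.2
  linarith

lemma main_induction (I : Inst J M) : ∀ (n : ℕ) (s : J → Finset M), DAInv I s →
    Fintype.card J * Fintype.card M ≤ ∑ j, (s j).card + n → ∃ a, IsStable I a := by
  intro n
  induction n with
  | zero =>
    intro s hInv hcard
    by_cases hrel : IsRelaxed I (assign I s)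
    · exact ⟨_, stable_of_relaxed hInv hrel⟩
    · exfalso
      unfold IsRelaxed at hrel; push_neg at hrel
      obtain ⟨m, j, -, -, -⟩ := hrel
      have hJ : 0 < Fintype.card J := Fintype.card_pos_iff.mpr ⟨j⟩
      have hM : 0 < Fintype.card M := Fintype.card_pos_iff.mpr ⟨I.md⟩
      have hsub : ∀ j, (s j).card ≤ Fintype.card M - 1 := by
        intro j
        have hss : s j ⊆ Finset.univ.erase I.md := fun m hm =>
          Finset.mem_erase.mpr ⟨(hInv j m hm).2.1, Finset.mem_univ m⟩
        calc (s j).card ≤ (Finset.univ.erase I.md).card := Finset.card_le_card hss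
          _ = Fintype.card M - 1 := by
              rw [Finset.card_erase_of_mem (Finset.mem_univ _), Finset.card_univ]
      have hsum : ∑ j, (s j).card ≤ Fintype.card J * (Fintype.card M - 1) := by
        calc ∑ j, (s j).card ≤ ∑ _j : J, (Fintype.card M - 1) :=
              Finset.sum_le_sum (fun j _ => hsub j)
          _ = Fintype.card J * (Fintype.card M - 1) := by
              rw [Finset.sum_const, smul_eq_mul, Finset.card_univ]
      have h1 : Fintype.card M - 1 < Fintype.card M := Nat.sub_lt hM one_pos
      have h2 := Nat.mul_lt_mul_of_pos_left h1 hJ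
      linarith
  | succ n ih =>
    intro s hInv hcard
    by_cases hrel : IsRelaxed I (assign I s)
    · exact ⟨_, stable_of_relaxed hInv hrel⟩
    · unfold IsRelaxed at hrel; push_neg at hrel
      obtain ⟨m, j, hjm, hmax, hload⟩ := hrel
      have hmdn : ∀ j, I.md ∉ s j := fun j hm => (hInv j _ hm).2.1 rfl
      have hadj_a : ∀ j', I.adj j' (assign I s j') :=
        fun j' => (mem_avail.mp (assign_mem (hmdn j'))).1
      have hnot : ∀ j', assign I s j' ∉ s j' :=
        fun j' => (mem_avail.mp (assign_mem (hmdn j'))).2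
      have hloadle : load I (assign I s) m ≤ ∑ j, I.qJ j := by
        unfold load
        exact Finset.sum_le_sum_of_subset_of_nonneg (Finset.filter_subset _ _)
          (fun i _ _ => (I.qJ_pos i).le)
      have hmne : m ≠ I.md := by
        intro h; subst h
        have h1 := I.md_cap
        have h2 := I.qJ_pos j
        linarith
      have hmnotins : m ∉ s j := hjm ▸ hnot j
      set s' := Function.update s j (insert m (s j)) with hs'
      have hs'j : s' j = insert m (s j) := by rw [hs']; simp
      have hs'o : ∀ j', j' ≠ j → s' j' = s j' := by
        intro j' h; rw [hs']; simp [Function.update_of_ne h]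
      have hmd' : ∀ j', I.md ∉ s' j' := by
        intro j'
        by_cases h : j' = j
        · subst h; rw [hs'j]
          simp only [Finset.mem_insert, not_or]
          exact ⟨fun h => hmne h.symm, hmdn j'⟩
        · rw [hs'o j' h]; exact hmdn j'
      have hao : ∀ j', j' ≠ j → assign I s' j' = assign I s j' := fun j' h =>
        assign_eq_of_eq I (hs'o j' h) (hmd' j')
      have ha'j : assign I s' j ≠ m := by
        intro h
        have h1 := (mem_avail.mp (assign_mem (hmd' j))).2
        rw [h, hs'j] at h1
        exact h1 (Finset.mem_insert_self _ _)
      have hstrict : ∀ j', j' ≠ j → assign I s j' = m →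
          I.rankM m j' < I.rankM m j := by
        intro j' hne hjm'
        rcases lt_or_eq_of_le (hmax j' hjm') with h | h
        · exact h
        · exact absurd (I.rankM_inj m j' j (hjm' ▸ hadj_a j') (hjm ▸ hadj_a j) h) hne
      have hjA : j ∈ Finset.univ.filter (fun j' => assign I s j' = m) := by simp [hjm]
      have hersum : ∑ j' ∈ (Finset.univ.filter (fun j' => assign I s j' = m)).erase j, I.qJ j'
          = load I (assign I s) m - I.qJ j := by
        unfold load; rw [Finset.sum_erase_eq_sub hjA]
      have hnewset : ∀ r : ℕ, I.rankM m j ≤ r →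
          Finset.univ.filter (fun j' => assign I s' j' = m ∧ I.rankM m j' < r)
            = (Finset.univ.filter (fun j' => assign I s j' = m)).erase j := by
        intro r hr
        ext j'
        simp only [Finset.mem_filter, Finset.mem_erase, Finset.mem_univ, true_and]
        constructor
        · rintro ⟨h1, _⟩
          have hne : j' ≠ j := by rintro rfl; exact ha'j h1
          exact ⟨hne, by rw [← hao j' hne]; exact h1⟩
        · rintro ⟨hne, h1⟩
          exact ⟨by rw [hao j' hne]; exact h1, lt_of_lt_of_le (hstrict j' hne h1) hr⟩
      have key : ∀ j₀ m₀, m₀ ∈ s j₀ → I.qM m₀ ≤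
          ∑ j' ∈ Finset.univ.filter
            (fun j' => assign I s' j' = m₀ ∧ I.rankM m₀ j' < I.rankM m₀ j₀), I.qJ j' := by
        intro j₀ m₀ hm₀
        have hold := (hInv j₀ m₀ hm₀).2.2
        by_cases hmm : m₀ = m
        · subst hmm
          by_cases hb : I.rankM m₀ j < I.rankM m₀ j₀
          · rw [hnewset _ hb.le, hersum]; exact hload
          · have hset : Finset.univ.filter
                (fun j' => assign I s' j' = m₀ ∧ I.rankM m₀ j' < I.rankM m₀ j₀)
                = Finset.univ.filter
                (fun j' => assign I s j' = m₀ ∧ I.rankM m₀ j' < I.rankM m₀ j₀) := by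
              ext j'
              simp only [Finset.mem_filter, Finset.mem_univ, true_and]
              by_cases hne : j' = j
              · subst hne
                constructor
                · rintro ⟨h1, _⟩; exact absurd h1 ha'j
                · rintro ⟨_, h2⟩; exact absurd h2 hb
              · rw [hao j' hne]
            rw [hset]; exact hold
        · refine le_trans hold (Finset.sum_le_sum_of_subset_of_nonneg ?_
            (fun i _ _ => (I.qJ_pos i).le))
          intro j' hj'
          simp only [Finset.mem_filter, Finset.mem_univ, true_and] at hj' ⊢
          obtain ⟨h1, h2⟩ := hj'
          have hne : j' ≠ j := by rintro rfl; exact hmm (h1 ▸ hjm ▸ rfl)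
          exact ⟨by rw [hao j' hne]; exact h1, h2⟩
      have hInv' : DAInv I s' := by
        intro j₀ m₀ hm₀
        by_cases hj0 : j₀ = j
        · subst hj0
          rw [hs'j] at hm₀
          rcases Finset.mem_insert.mp hm₀ with rfl | h
          · refine ⟨hjm ▸ hadj_a j₀, hmne, ?_⟩
            rw [hnewset _ le_rfl, hersum]; exact hload
          · exact ⟨(hInv j₀ m₀ h).1, (hInv j₀ m₀ h).2.1, key j₀ m₀ h⟩
        · rw [hs'o j₀ hj0] at hm₀
          exact ⟨(hInv j₀ m₀ hm₀).1, (hInv j₀ m₀ hm₀).2.1, key j₀ m₀ hm₀⟩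
      have hcount : ∑ j', (s' j').card = ∑ j', (s j').card + 1 := by
        have hc : ∀ j', (s' j').card = (s j').card + if j' = j then 1 else 0 := by
          intro j'
          by_cases h : j' = j
          · subst h
            rw [hs'j, Finset.card_insert_of_notMem hmnotins]; simp
          · rw [hs'o j' h]; simp [h]
        rw [Finset.sum_congr rfl (fun j' _ => hc j'), Finset.sum_add_distrib]
        simp
      refine ih s' hInv' (hcard.trans ?_)
      rw [hcount]; omega

/-- every instance admits at least one relaxed unsplit stable
assignment. -/
theorem exists_relaxed_unsplit_stable (I : Inst J M) :
    ∃ a : J → M, IsStable I a := by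
  refine main_induction I (Fintype.card J * Fintype.card M) (fun _ => ∅) ?_ ?_
  · intro j m hm; simp at hm
  · simp
end

section
/- Every instance of the relaxed unsplittable stable allocation problem admits a machine-optimal relaxed unsplit stable assignment, i.e., a relaxed unsplit stable assignment x_mopt such that every machine weakly prefers x_mopt (in the lexicographic order) to every relaxed unsplit stable assignment. -/
open Finset

variable {J M : Type} [Fintype J] [DecidableEq J] [Fintype M] [DecidableEq M]

/-! ### Auxiliary development: machine-proposing deferred acceptance -/

namespace GSAux

attribute [local instance 10] Classical.propDecidable

noncomputable section

variable {J M : Type} [Fintype J] [DecidableEq J] [Fintype M] [DecidableEq M]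

/-- Degree of machine `m`: number of adjacent jobs. -/
def deg (I : Inst J M) (m : M) : ℕ := (univ.filter fun j => I.adj j m).card

/-- Position of job `j` in machine `m`'s preference list (over adjacent jobs). -/
def rk (I : Inst J M) (m : M) (j : J) : ℕ :=
  (univ.filter fun j' => I.adj j' m ∧ I.rankM m j' < I.rankM m j).card

/-- In state `k`, machine `m` has proposed to job `j`. -/
def propTo (I : Inst J M) (k : M → ℕ) (m : M) (j : J) : Prop :=
  I.adj j m ∧ rk I m j < k m

/-- In state `k`, job `j` currently holds machine `m` (its best proposer). -/
def holds (I : Inst J M) (k : M → ℕ) (m : M) (j : J) : Prop :=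
  propTo I k m j ∧ ∀ m', propTo I k m' j → I.rankJ j m ≤ I.rankJ j m'

def Aset (I : Inst J M) (k : M → ℕ) (m : M) : Finset J :=
  univ.filter fun j => holds I k m j

def loadA (I : Inst J M) (k : M → ℕ) (m : M) : ℝ := ∑ j ∈ Aset I k m, I.qJ j

/-- Machine `m` can make a further proposal in state `k`. -/
def canStep (I : Inst J M) (k : M → ℕ) (m : M) : Prop :=
  loadA I k m < I.qM m ∧ k m < deg I m

/-- The run of the algorithm. -/
def kseq (I : Inst J M) : ℕ → M → ℕ
  | 0 => fun _ => 0
  | (t+1) =>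
    if h : ∃ m, canStep I (kseq I t) m then
      Function.update (kseq I t) h.choose (kseq I t h.choose + 1)
    else kseq I t

variable {I : Inst J M}

lemma rk_lt_rk {m : M} {j j' : J} (hj : I.adj j m) (h : I.rankM m j < I.rankM m j') :
    rk I m j < rk I m j' := by
  apply Finset.card_lt_card
  constructor
  · intro x hx
    simp only [Finset.mem_filter, Finset.mem_univ, true_and] at hx ⊢
    exact ⟨hx.1, hx.2.trans h⟩
  · intro hsub
    have := hsub (by simp [hj, h] : j ∈ univ.filter fun j'' => I.adj j'' m ∧ I.rankM m j'' < I.rankM m j')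
    simp at this

lemma rk_le_rk {m : M} {j j' : J} (h : I.rankM m j ≤ I.rankM m j') :
    rk I m j ≤ rk I m j' := by
  apply Finset.card_le_card
  intro x hx
  simp only [Finset.mem_filter, Finset.mem_univ, true_and] at hx ⊢
  exact ⟨hx.1, lt_of_lt_of_le hx.2 h⟩

lemma rankM_lt_of_rk_lt {m : M} {j j' : J} (h : rk I m j < rk I m j') :
    I.rankM m j < I.rankM m j' := by
  by_contra hc
  push_neg at hc
  exact absurd (rk_le_rk hc) (by omega)

lemma rk_lt_deg {m : M} {j : J} (hj : I.adj j m) : rk I m j < deg I m := by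
  apply Finset.card_lt_card
  constructor
  · intro x hx
    simp only [Finset.mem_filter, Finset.mem_univ, true_and] at hx ⊢
    exact hx.1
  · intro hsub
    have := hsub (by simp [hj] : j ∈ univ.filter fun j'' => I.adj j'' m)
    simp [hj] at this

lemma propTo_mono {k k' : M → ℕ} (h : ∀ m, k m ≤ k' m) {m : M} {j : J}
    (hp : propTo I k m j) : propTo I k' m j :=
  ⟨hp.1, lt_of_lt_of_le hp.2 (h m)⟩

lemma kseq_succ (t : ℕ) :
    ((¬ ∃ m, canStep I (kseq I t) m) ∧ kseq I (t+1) = kseq I t) ∨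
    ∃ m, canStep I (kseq I t) m ∧
      kseq I (t+1) = Function.update (kseq I t) m (kseq I t m + 1) := by
  by_cases h : ∃ m, canStep I (kseq I t) m
  · exact Or.inr ⟨h.choose, h.choose_spec, by simp [kseq, dif_pos h]⟩
  · exact Or.inl ⟨h, by simp [kseq, dif_neg h]⟩

lemma kseq_mono_succ (t : ℕ) (m : M) : kseq I t m ≤ kseq I (t+1) m := by
  rcases kseq_succ (I := I) t with ⟨_, h⟩ | ⟨m0, _, h⟩
  · rw [h]
  · rw [h]
    by_cases hm : m = m0
    · subst hm; simp
    · rw [Function.update_of_ne hm]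

lemma kseq_mono {s t : ℕ} (h : s ≤ t) (m : M) : kseq I s m ≤ kseq I t m := by
  induction h with
  | refl => exact le_refl _
  | step hn ih => exact le_trans ih (kseq_mono_succ _ m)

lemma kseq_le_deg (t : ℕ) (m : M) : kseq I t m ≤ deg I m := by
  induction t with
  | zero => simp [kseq]
  | succ n ih =>
    rcases kseq_succ (I := I) n with ⟨_, h⟩ | ⟨m0, hc, h⟩
    · rw [h]; exact ih
    · rw [h]
      by_cases hm : m = m0
      · subst hm; simp only [Function.update_self]; exact hc.2
      · rw [Function.update_of_ne hm]; exact ih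

/-- The algorithm terminates. -/
lemma exists_terminal (I : Inst J M) : ∃ t, ¬ ∃ m, canStep I (kseq I t) m := by
  by_contra h
  push_neg at h
  have grow : ∀ t, (t : ℕ) ≤ ∑ m, kseq I t m := by
    intro t
    induction t with
    | zero => simp
    | succ n ih =>
      rcases kseq_succ (I := I) n with ⟨hne, _⟩ | ⟨m0, _, heq⟩
      · exact absurd (h n) hne
      · rw [heq, Finset.sum_update_of_mem (Finset.mem_univ m0)]
        have h2 : ∑ m ∈ univ \ {m0}, kseq I n m = (∑ m, kseq I n m) - kseq I n m0 := by
          rw [Finset.sdiff_singleton_eq_erase]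
          have := Finset.add_sum_erase univ (kseq I n) (Finset.mem_univ m0)
          omega
        have h3 : kseq I n m0 ≤ ∑ m, kseq I n m := by
          have := Finset.add_sum_erase univ (kseq I n) (Finset.mem_univ m0)
          omega
        omega
  have hb : ∀ t, ∑ m, kseq I t m ≤ ∑ m, deg I m :=
    fun t => Finset.sum_le_sum fun m _ => kseq_le_deg t m
  have := grow ((∑ m, deg I m) + 1)
  have := hb ((∑ m, deg I m) + 1)
  omega

/-- Terminal time. -/
def tK (I : Inst J M) : ℕ := (exists_terminal I).choose

/-- Terminal state. -/
def K (I : Inst J M) : M → ℕ := kseq I (tK I)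

lemma terminal (I : Inst J M) : ¬ ∃ m, canStep I (K I) m := (exists_terminal I).choose_spec

lemma flip_aux {P : ℕ → Prop} (h0 : ¬ P 0) : ∀ {t}, P t → ∃ s, s < t ∧ ¬ P s ∧ P (s+1) := by
  intro t
  induction t with
  | zero => exact fun h => absurd h h0
  | succ n ih =>
    intro h
    by_cases hn : P n
    · obtain ⟨s, h1, h2, h3⟩ := ih hn
      exact ⟨s, by omega, h2, h3⟩
    · exact ⟨n, by omega, hn, h⟩

/-- If `m` has proposed to `j` by time `t`, there is an earlier moment at which
this proposal was made, with the step side conditions. -/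
lemma exists_window {t : ℕ} {m : M} {j : J} (hp : propTo I (kseq I t) m j) :
    ∃ s, s < t ∧ canStep I (kseq I s) m ∧ kseq I s m = rk I m j := by
  have h0 : ¬ propTo I (kseq I 0) m j := fun h => Nat.not_lt_zero _ h.2
  obtain ⟨s, hst, hP1, hP2⟩ := flip_aux (P := fun t => propTo I (kseq I t) m j) h0 hp
  rcases kseq_succ (I := I) s with ⟨_, heq⟩ | ⟨m0, hc, heq⟩
  · rw [heq] at hP2; exact absurd hP2 hP1
  · by_cases hm : m = m0
    · subst hm
      refine ⟨s, hst, hc, ?_⟩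
      have h1 : rk I m j < kseq I (s+1) m := hP2.2
      rw [heq, Function.update_self] at h1
      have h2 : ¬ rk I m j < kseq I s m := fun hh => hP1 ⟨hP2.1, hh⟩
      omega
    · refine absurd ⟨hP2.1, ?_⟩ hP1
      have h2 : rk I m j < kseq I (s+1) m := hP2.2
      rwa [heq, Function.update_of_ne hm] at h2

lemma qJ_nonneg (I : Inst J M) (j : J) : (0:ℝ) ≤ I.qJ j := le_of_lt (I.qJ_pos j)

lemma loadA_md_lt (k : M → ℕ) : loadA I k I.md < I.qM I.md := by
  have h1 : loadA I k I.md ≤ ∑ j : J, I.qJ j := by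
    apply Finset.sum_le_sum_of_subset_of_nonneg (Finset.filter_subset _ _)
    intro j _ _; exact qJ_nonneg I j
  exact lt_of_le_of_lt h1 I.md_cap

lemma propTo_md (j : J) : propTo I (K I) I.md j := by
  refine ⟨I.md_adj j, ?_⟩
  have h1 : ¬ canStep I (K I) I.md := fun h => terminal I ⟨I.md, h⟩
  have h2 : ¬ K I I.md < deg I I.md := fun h => h1 ⟨loadA_md_lt _, h⟩
  have := rk_lt_deg (I := I) (I.md_adj j)
  omega

/-- The set of machines having proposed to `j` at the terminal state. -/
def propset (I : Inst J M) (j : J) : Finset M := univ.filter fun m => propTo I (K I) m j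

lemma propset_nonempty (I : Inst J M) (j : J) : (propset I j).Nonempty :=
  ⟨I.md, by simp [propset, propTo_md]⟩

/-- The output assignment: each job goes to its best proposer. -/
def ga (I : Inst J M) (j : J) : M :=
  (Finset.exists_min_image (propset I j) (I.rankJ j) (propset_nonempty I j)).choose

lemma ga_spec (I : Inst J M) (j : J) :
    ga I j ∈ propset I j ∧ ∀ m' ∈ propset I j, I.rankJ j (ga I j) ≤ I.rankJ j m' :=
  (Finset.exists_min_image (propset I j) (I.rankJ j) (propset_nonempty I j)).choose_spec

lemma ga_holds (I : Inst J M) (j : J) : holds I (K I) (ga I j) j := by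
  obtain ⟨h1, h2⟩ := ga_spec I j
  simp only [propset, Finset.mem_filter, Finset.mem_univ, true_and] at h1
  exact ⟨h1, fun m' hm' => h2 m' (by simp [propset, hm'])⟩

lemma holds_ga {m : M} {j : J} (h : holds I (K I) m j) : ga I j = m := by
  have hg := ga_holds I j
  have h1 : I.rankJ j (ga I j) ≤ I.rankJ j m := hg.2 m h.1
  have h2 : I.rankJ j m ≤ I.rankJ j (ga I j) := h.2 (ga I j) hg.1
  exact I.rankJ_inj j (ga I j) m hg.1.1 h.1.1 (le_antisymm h1 h2)

/-- Key invariant: no machine ever proposes to a job that it obtains in some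
stable assignment while that job prefers its stable machine less...
precisely: every proposal received by `j` is weakly worse than `j`'s machine
in any stable assignment. -/
lemma inv (t : ℕ) : ∀ b : J → M, IsStable I b → ∀ (j : J) (m1 : M),
    propTo I (kseq I t) m1 j → I.rankJ j (b j) ≤ I.rankJ j m1 := by
  induction t using Nat.strong_induction_on with
  | _ t ih =>
    intro b hb j m1 hp
    by_contra hlt
    push_neg at hlt
    have hne : b j ≠ m1 := fun h => by rw [h] at hlt; omega
    obtain ⟨s, hst, hc, hks⟩ := exists_window hp
    have hsub : (univ.filter fun j' => b j' = m1 ∧ I.rankM m1 j' < I.rankM m1 j)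
        ⊆ Aset I (kseq I s) m1 := by
      intro j' hj'
      simp only [Finset.mem_filter, Finset.mem_univ, true_and] at hj'
      obtain ⟨hbj', hr⟩ := hj'
      have hadj' : I.adj j' m1 := by have := hb.1 j'; rwa [hbj'] at this
      have hpt : propTo I (kseq I s) m1 j' := by
        refine ⟨hadj', ?_⟩
        rw [hks]
        exact rk_lt_rk hadj' hr
      simp only [Aset, Finset.mem_filter, Finset.mem_univ, true_and]
      refine ⟨hpt, fun m2 hm2 => ?_⟩
      have := ih s hst b hb j' m2 hm2
      rwa [hbj'] at this
    have hsum : (∑ j' ∈ univ.filter (fun j' => b j' = m1 ∧ I.rankM m1 j' < I.rankM m1 j),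
        I.qJ j') < I.qM m1 := by
      calc _ ≤ loadA I (kseq I s) m1 :=
              Finset.sum_le_sum_of_subset_of_nonneg hsub (fun j' _ _ => qJ_nonneg I j')
        _ < I.qM m1 := hc.1
    exact hb.2.2 j m1 ⟨hp.1, hne, hlt, hsum⟩

lemma ga_unsplit (I : Inst J M) : IsUnsplit I (ga I) := fun j => (ga_holds I j).1.1

lemma Aset_eq (m : M) : Aset I (K I) m = univ.filter fun j => ga I j = m := by
  ext j
  simp only [Aset, Finset.mem_filter, Finset.mem_univ, true_and]
  constructor
  · exact holds_ga
  · intro h; rw [← h]; exact ga_holds I j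

lemma ga_relaxed (I : Inst J M) : IsRelaxed I (ga I) := by
  intro m j hj hworst
  have hh : holds I (K I) m j := by rw [← hj]; exact ga_holds I j
  obtain ⟨s, hst, hc, hks⟩ := exists_window hh.1
  have hsub : (univ.filter fun j' => ga I j' = m).erase j ⊆ Aset I (kseq I s) m := by
    intro j' hj'
    rw [Finset.mem_erase, Finset.mem_filter] at hj'
    obtain ⟨hne, _, hgj'⟩ := hj'
    have hh' : holds I (K I) m j' := by rw [← hgj']; exact ga_holds I j'
    have hrlt : I.rankM m j' < I.rankM m j := by
      have h1 : I.rankM m j' ≤ I.rankM m j := hworst j' hgj'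
      rcases lt_or_eq_of_le h1 with h | h
      · exact h
      · exact absurd (I.rankM_inj m j' j hh'.1.1 hh.1.1 h) hne
    have hpt : propTo I (kseq I s) m j' := ⟨hh'.1.1, by rw [hks]; exact rk_lt_rk hh'.1.1 hrlt⟩
    simp only [Aset, Finset.mem_filter, Finset.mem_univ, true_and]
    exact ⟨hpt, fun m2 hm2 => hh'.2 m2 (propTo_mono (kseq_mono (by omega)) hm2)⟩
  have hmem : j ∈ univ.filter fun j' => ga I j' = m := by simp [hj]
  have hsum := Finset.add_sum_erase _ I.qJ hmem
  have hle : (∑ j' ∈ (univ.filter fun j' => ga I j' = m).erase j, I.qJ j')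
      ≤ loadA I (kseq I s) m :=
    Finset.sum_le_sum_of_subset_of_nonneg hsub (fun j' _ _ => qJ_nonneg I j')
  have : load I (ga I) m = I.qJ j + ∑ j' ∈ (univ.filter fun j' => ga I j' = m).erase j, I.qJ j' := by
    rw [hsum]; rfl
  have hc1 := hc.1
  linarith

lemma ga_noblock (I : Inst J M) : ∀ j m, ¬ Blocks I (ga I) j m := by
  intro j m hB
  obtain ⟨hadj, hne, hlt, hsum⟩ := hB
  have hnp : ¬ propTo I (K I) m j := by
    intro hp
    have := (ga_holds I j).2 m hp
    omega
  have hKm : K I m ≤ rk I m j := by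
    by_contra h
    exact hnp ⟨hadj, by omega⟩
  have hload : I.qM m ≤ loadA I (K I) m := by
    have h1 : ¬ canStep I (K I) m := fun h => terminal I ⟨m, h⟩
    have h2 : K I m < deg I m := lt_of_le_of_lt hKm (rk_lt_deg hadj)
    by_contra h
    push_neg at h
    exact h1 ⟨h, h2⟩
  have hsub : Aset I (K I) m ⊆ univ.filter fun j' => ga I j' = m ∧ I.rankM m j' < I.rankM m j := by
    intro j' hj'
    simp only [Aset, Finset.mem_filter, Finset.mem_univ, true_and] at hj' ⊢
    refine ⟨holds_ga hj', rankM_lt_of_rk_lt ?_⟩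
    exact lt_of_lt_of_le hj'.1.2 hKm
  have : loadA I (K I) m ≤ ∑ j' ∈ univ.filter (fun j' => ga I j' = m ∧ I.rankM m j' < I.rankM m j), I.qJ j' :=
    Finset.sum_le_sum_of_subset_of_nonneg hsub (fun j' _ _ => qJ_nonneg I j')
  linarith

lemma ga_stable (I : Inst J M) : IsStable I (ga I) :=
  ⟨ga_unsplit I, ga_relaxed I, ga_noblock I⟩

lemma ga_moptimal (I : Inst J M) : ∀ b, IsStable I b → ∀ m, MPrefers I m (ga I) b := by
  intro b hb m
  set D := univ.filter (fun j => (ga I j = m ∧ b j ≠ m) ∨ (b j = m ∧ ga I j ≠ m)) with hD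
  by_cases hDe : D = ∅
  · left
    intro j
    have : j ∉ D := by rw [hDe]; exact Finset.notMem_empty j
    simp only [hD, Finset.mem_filter, Finset.mem_univ, true_and] at this
    push_neg at this
    exact ⟨fun h => this.1 h, fun h => this.2 h⟩
  · obtain ⟨jstar, hjmem, hjmin⟩ :=
      Finset.exists_min_image D (I.rankM m) (Finset.nonempty_of_ne_empty hDe)
    have hgj : ga I jstar = m := by
      by_contra hgne
      have hbj : b jstar = m := by
        simp only [hD, Finset.mem_filter, Finset.mem_univ, true_and] at hjmem
        rcases hjmem with ⟨h1, _⟩ | ⟨h1, _⟩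
        · exact absurd h1 hgne
        · exact h1
      have hadj : I.adj jstar m := by have := hb.1 jstar; rwa [hbj] at this
      by_cases hpt : propTo I (K I) m jstar
      · have hhold : holds I (K I) m jstar := by
          refine ⟨hpt, fun m2 hm2 => ?_⟩
          have := inv (I := I) (tK I) b hb jstar m2 hm2
          rwa [hbj] at this
        exact hgne (holds_ga hhold)
      · have hKm : K I m ≤ rk I m jstar := by
          by_contra h
          exact hpt ⟨hadj, by omega⟩
        have hload : I.qM m ≤ loadA I (K I) m := by
          have h1 : ¬ canStep I (K I) m := fun h => terminal I ⟨m, h⟩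
          have h2 : K I m < deg I m := lt_of_le_of_lt hKm (rk_lt_deg hadj)
          by_contra h
          push_neg at h
          exact h1 ⟨h, h2⟩
        -- the least-preferred job assigned to m by b
        obtain ⟨w, hwmem, hwmax⟩ :=
          Finset.exists_max_image (univ.filter fun j' => b j' = m) (I.rankM m)
            ⟨jstar, by simp [hbj]⟩
        simp only [Finset.mem_filter, Finset.mem_univ, true_and] at hwmem
        have hrel := hb.2.1 m w hwmem (fun j' hj' => hwmax j' (by simp [hj']))
        have hsub : Aset I (K I) m ⊆ (univ.filter fun j' => b j' = m).erase w := by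
          intro j' hj'
          simp only [Aset, Finset.mem_filter, Finset.mem_univ, true_and] at hj'
          have hrlt : I.rankM m j' < I.rankM m jstar :=
            rankM_lt_of_rk_lt (lt_of_lt_of_le hj'.1.2 hKm)
          have hbj' : b j' = m := by
            by_contra hbne
            have : j' ∈ D := by
              simp only [hD, Finset.mem_filter, Finset.mem_univ, true_and]
              exact Or.inl ⟨holds_ga hj', hbne⟩
            have := hjmin j' this
            omega
          have hjw : I.rankM m jstar ≤ I.rankM m w := hwmax jstar (by simp [hbj])
          refine Finset.mem_erase.mpr ⟨?_, by simp [hbj']⟩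
          intro h
          rw [h] at hrlt
          omega
        have h1 : loadA I (K I) m ≤ ∑ j' ∈ (univ.filter fun j' => b j' = m).erase w, I.qJ j' :=
          Finset.sum_le_sum_of_subset_of_nonneg hsub (fun j' _ _ => qJ_nonneg I j')
        have h2 := Finset.add_sum_erase _ I.qJ
          (by simp [hwmem] : w ∈ univ.filter fun j' => b j' = m)
        have h3 : load I b m = I.qJ w + ∑ j' ∈ (univ.filter fun j' => b j' = m).erase w, I.qJ j' := by
          rw [h2]; rfl
        rw [h3] at hrel
        linarith
    right
    refine ⟨jstar, hgj, ?_, ?_⟩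
    · simp only [hD, Finset.mem_filter, Finset.mem_univ, true_and] at hjmem
      rcases hjmem with ⟨_, h2⟩ | ⟨_, h2⟩
      · exact h2
      · exact absurd hgj h2
    · intro j' hj'
      exact hjmin j' (by simp only [hD, Finset.mem_filter, Finset.mem_univ, true_and]; exact hj')

end

end GSAux

/-- every instance admits a machine-optimal relaxed unsplit
stable assignment. -/
theorem exists_machine_optimal (I : Inst J M) :
    ∃ a : J → M, MOptimal I a :=
  ⟨GSAux.ga I, GSAux.ga_stable I, GSAux.ga_moptimal I⟩
end

section
/- Every instance of the relaxed unsplittable stable allocation problem admits a job-optimal relaxed unsplit stable assignment, i.e., a relaxed unsplit stable assignment x_jopt such that every job weakly prefers its assigned machine in x_jopt to its assigned machine in every relaxed unsplit stable assignment. -/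
/-!
Job-proposing deferred acceptance. Keep a set `R` of rejected edges and let every job propose
to its best machine not yet rejecting it; a machine may reject its least preferred proposer `j`
whenever it is still full without `j`. Such a rejection never discards an edge of a relaxed
stable assignment `a`: if `a` assigned `j` to `m`, then every job filling `m` ahead of `j` would
have to sit on `m` in `a` as well (otherwise it blocks `a`), and then `m` would exceed its
relaxed capacity in `a`. The dummy machine is never full, so every job keeps a proposal. Once no
rejection is possible, the proposals form a relaxed stable assignment, and each job holds its best
edge that no relaxed stable assignment uses.
-/

open Finset

variable {J M : Type} [Fintype J] [DecidableEq J] [Fintype M] [DecidableEq M]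

namespace Inst

variable (I : Inst J M)

-- `Blocks I a j m` ends with `I.betterLoad a m j < I.qM m` up to unfolding.
def betterLoad (a : J → M) (m : M) (j : J) : ℝ :=
  ∑ j' ∈ univ.filter (fun j' => a j' = m ∧ I.rankM m j' < I.rankM m j), I.qJ j'

def Rejectable (a : J → M) (j : J) : Prop :=
  (∀ j', a j' = a j → I.rankM (a j) j' ≤ I.rankM (a j) j) ∧
    I.qM (a j) ≤ load I a (a j) - I.qJ j

def available (R : Finset (J × M)) (j : J) : Set M :=
  {m | I.adj j m ∧ (j, m) ∉ R}

open Classical in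
noncomputable def propose (R : Finset (J × M)) (j : J) : M :=
  if h : (I.available R j).Nonempty then Function.argminOn (I.rankJ j) _ h else I.md

structure DAInvariant (R : Finset (J × M)) : Prop where
  dummy_notMem : ∀ j, (j, I.md) ∉ R
  qM_le_betterLoad : ∀ j m, (j, m) ∈ R → I.qM m ≤ I.betterLoad (I.propose R) m j
  stable_notMem : ∀ a, IsStable I a → ∀ j, (j, a j) ∉ R

variable {I}

lemma isRelaxed_of_forall_not_rejectable {a : J → M} (h : ∀ j, ¬ I.Rejectable a j) :
    IsRelaxed I a := by
  rintro m j rfl hworst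
  exact not_le.1 fun hq => h j ⟨hworst, hq⟩

lemma load_le_sum_qJ (a : J → M) (m : M) : load I a m ≤ ∑ j, I.qJ j :=
  sum_le_sum_of_subset_of_nonneg (filter_subset _ _) fun j _ _ => (I.qJ_pos j).le

lemma Rejectable.ne_md {a : J → M} {j : J} (h : I.Rejectable a j) : a j ≠ I.md := by
  intro hmd
  have hcap := h.2
  rw [hmd] at hcap
  linarith [load_le_sum_qJ (I := I) a I.md, I.md_cap, I.qJ_pos j]

lemma betterLoad_le_betterLoad {a b : J → M} {m : M} {j k : J}
    (h : ∀ j', a j' = m → I.rankM m j' < I.rankM m j → b j' = m ∧ I.rankM m j' < I.rankM m k) :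
    I.betterLoad a m j ≤ I.betterLoad b m k := by
  refine sum_le_sum_of_subset_of_nonneg (fun j' hj' => ?_) fun j _ _ => (I.qJ_pos j).le
  simp only [mem_filter, mem_univ, true_and] at hj' ⊢
  exact h j' hj'.1 hj'.2

lemma load_sub_qJ_eq_betterLoad {a : J → M} {m : M} {j : J} (hj : a j = m)
    (hadj : ∀ j', a j' = m → I.adj j' m)
    (hworst : ∀ j', a j' = m → I.rankM m j' ≤ I.rankM m j) :
    load I a m - I.qJ j = I.betterLoad a m j := by
  rw [load, ← sum_erase_eq_sub (by simpa using hj), betterLoad]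
  congr 1
  ext j'
  simp only [mem_erase, mem_filter, mem_univ, true_and]
  constructor
  · rintro ⟨hne, hj'⟩
    refine ⟨hj', (hworst j' hj').lt_of_ne fun hrank => hne ?_⟩
    exact I.rankM_inj m j' j (hadj j' hj') (hadj j hj) hrank
  · rintro ⟨hj', hlt⟩
    exact ⟨by rintro rfl; exact lt_irrefl _ hlt, hj'⟩

lemma betterLoad_lt_qM {a : J → M} (ha : IsRelaxed I a) {m : M} {j w : J} (hw : a w = m)
    (hj : I.rankM m j ≤ I.rankM m w) : I.betterLoad a m j < I.qM m := by
  obtain ⟨v, hv, hvmax⟩ :=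
    exists_max_image (univ.filter fun j' => a j' = m) (I.rankM m) ⟨w, by simpa using hw⟩
  simp only [mem_filter, mem_univ, true_and] at hv hvmax
  calc I.betterLoad a m j ≤ ∑ j' ∈ (univ.filter fun j' => a j' = m).erase v, I.qJ j' := by
        refine sum_le_sum_of_subset_of_nonneg (fun j' hj' => ?_) fun j _ _ => (I.qJ_pos j).le
        simp only [mem_filter, mem_univ, true_and, mem_erase] at hj' ⊢
        refine ⟨?_, hj'.1⟩
        rintro rfl
        exact absurd (hj'.2.trans_le (hj.trans (hvmax w hw))) (lt_irrefl _)
    _ = load I a m - I.qJ v := sum_erase_eq_sub (by simpa using hv)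
    _ < I.qM m := ha m v hv hvmax

lemma _root_.IsStable.rankJ_le {a : J → M} (ha : IsStable I a) {j w : J} {m : M} (hjm : I.adj j m)
    (hw : a w = m) (hj : I.rankM m j ≤ I.rankM m w) : I.rankJ j (a j) ≤ I.rankJ j m := by
  by_contra! hlt
  refine ha.2.2 j m ⟨hjm, ?_, hlt, betterLoad_lt_qM ha.2.1 hw hj⟩
  rintro rfl
  exact lt_irrefl _ hlt

section Propose

variable {R : Finset (J × M)} {j : J}

lemma propose_mem_available (hd : (j, I.md) ∉ R) : I.propose R j ∈ I.available R j := by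
  have hne : (I.available R j).Nonempty := ⟨I.md, I.md_adj j, hd⟩
  rw [propose, dif_pos hne]
  exact Function.argminOn_mem _ _ _

lemma rankJ_propose_le {m : M} (hm : m ∈ I.available R j) :
    I.rankJ j (I.propose R j) ≤ I.rankJ j m := by
  rw [propose, dif_pos ⟨m, hm⟩]
  exact Function.argminOn_le _ _ hm

lemma propose_insert_of_ne {j₀ : J} {m₀ : M} (h : j ≠ j₀) :
    I.propose (insert (j₀, m₀) R) j = I.propose R j := by
  have : I.available (insert (j₀, m₀) R) j = I.available R j := by
    ext m
    simp [available, h]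
  rw [propose, propose, this]

end Propose

namespace DAInvariant

lemma empty : I.DAInvariant ∅ :=
  ⟨by simp, by simp, by simp⟩

variable {R : Finset (J × M)} (hR : I.DAInvariant R) {j₀ : J}
  (hj₀ : I.Rejectable (I.propose R) j₀)
include hR

lemma propose_adj (j : J) : I.adj j (I.propose R j) :=
  (propose_mem_available (hR.dummy_notMem j)).1

lemma jPrefers_propose {a : J → M} (ha : IsStable I a) (j : J) :
    JPrefers I j (I.propose R) a :=
  rankJ_propose_le ⟨ha.1 j, hR.stable_notMem a ha j⟩

lemma isStable_propose (hstop : ∀ j, ¬ I.Rejectable (I.propose R) j) :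
    IsStable I (I.propose R) := by
  refine ⟨hR.propose_adj, isRelaxed_of_forall_not_rejectable hstop, ?_⟩
  rintro j m ⟨hjm, -, hlt, hfree⟩
  have hrej : (j, m) ∈ R := by
    by_contra h
    exact (rankJ_propose_le ⟨hjm, h⟩).not_gt hlt
  exact (hR.qM_le_betterLoad j m hrej).not_gt hfree

include hj₀

lemma qM_le_betterLoad_propose :
    I.qM (I.propose R j₀) ≤ I.betterLoad (I.propose R) (I.propose R j₀) j₀ := by
  rw [← load_sub_qJ_eq_betterLoad rfl (fun j' h => h ▸ hR.propose_adj j') hj₀.1]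
  exact hj₀.2

lemma insert_qM_le_betterLoad (j : J) (m : M) (hjm : (j, m) ∈ insert (j₀, I.propose R j₀) R) :
    I.qM m ≤ I.betterLoad (I.propose (insert (j₀, I.propose R j₀) R)) m j := by
  set m₀ := I.propose R j₀
  have hkeep : ∀ j', j' ≠ j₀ → I.propose (insert (j₀, m₀) R) j' = I.propose R j' :=
    fun j' h => propose_insert_of_ne h
  have hnew : I.qM m₀ ≤ I.betterLoad (I.propose (insert (j₀, m₀) R)) m₀ j₀ := by
    refine (hR.qM_le_betterLoad_propose hj₀).trans (betterLoad_le_betterLoad fun j' hj' hlt => ?_)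
    exact ⟨(hkeep j' (by rintro rfl; exact lt_irrefl _ hlt)).trans hj', hlt⟩
  rcases mem_insert.1 hjm with h | hold
  · obtain ⟨rfl, rfl⟩ := Prod.mk.inj h
    exact hnew
  -- If `j₀` counted towards an old rejection at `m₀`, the jobs ahead of `j₀` still fill `m₀`.
  by_cases hbelow : m₀ = m ∧ I.rankM m j₀ < I.rankM m j
  · obtain ⟨rfl, hlt⟩ := hbelow
    exact hnew.trans (betterLoad_le_betterLoad fun j' hj' hlt' => ⟨hj', hlt'.trans hlt⟩)
  · refine (hR.qM_le_betterLoad j m hold).trans (betterLoad_le_betterLoad fun j' hj' hlt => ?_)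
    refine ⟨(hkeep j' ?_).trans hj', hlt⟩
    rintro rfl
    exact hbelow ⟨hj', hlt⟩

/-- The jobs that fill `a j₀` ahead of `j₀` would all have to sit on `a j₀` in `a` as well,
overfilling it. -/
lemma apply_ne_propose_of_isStable {a : J → M} (ha : IsStable I a) :
    a j₀ ≠ I.propose R j₀ := by
  intro hm₀
  have hstay : I.betterLoad (I.propose R) (a j₀) j₀ ≤ I.betterLoad a (a j₀) j₀ := by
    refine betterLoad_le_betterLoad fun j' hj' hlt => ⟨?_, hlt⟩
    have hadj : I.adj j' (a j₀) := hj' ▸ hR.propose_adj j'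
    have hbest := rankJ_propose_le (R := R) ⟨ha.1 j', hR.stable_notMem a ha j'⟩
    rw [hj'] at hbest
    exact I.rankJ_inj j' _ _ (ha.1 j') hadj ((ha.rankJ_le hadj rfl hlt.le).antisymm hbest)
  have hfull := hR.qM_le_betterLoad_propose hj₀
  rw [← hm₀] at hfull
  exact (hfull.trans hstay).not_gt (betterLoad_lt_qM ha.2.1 rfl le_rfl)

lemma insert : I.DAInvariant (insert (j₀, I.propose R j₀) R) where
  dummy_notMem j := by
    rw [mem_insert, not_or, Prod.mk.injEq, not_and]
    exact ⟨fun _ hmd => hj₀.ne_md hmd.symm, hR.dummy_notMem j⟩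
  qM_le_betterLoad := hR.insert_qM_le_betterLoad hj₀
  stable_notMem a ha j := by
    rw [mem_insert, not_or, Prod.mk.injEq, not_and]
    refine ⟨?_, hR.stable_notMem a ha j⟩
    rintro rfl
    exact hR.apply_ne_propose_of_isStable hj₀ ha

end DAInvariant

lemma exists_dAInvariant_forall_not_rejectable :
    ∃ R, I.DAInvariant R ∧ ∀ j, ¬ I.Rejectable (I.propose R) j := by
  obtain ⟨R, hR, hmax⟩ := Set.Finite.exists_maximalFor Finset.card {R | I.DAInvariant R}
    (Set.toFinite _) ⟨∅, DAInvariant.empty⟩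
  refine ⟨R, hR, fun j hj => ?_⟩
  have hnew : (j, I.propose R j) ∉ R := (propose_mem_available (hR.dummy_notMem j)).2
  have hgrow := hmax (hR.insert hj) (card_le_card (subset_insert _ _))
  rw [card_insert_of_notMem hnew] at hgrow
  omega

end Inst

/-- every instance admits a job-optimal relaxed unsplit stable
assignment. -/
theorem exists_job_optimal (I : Inst J M) :
    ∃ a : J → M, JOptimal I a := by
  obtain ⟨R, hR, hstop⟩ := I.exists_dAInvariant_forall_not_rejectable
  exact ⟨I.propose R, hR.isStable_propose hstop, fun a ha j => hR.jPrefers_propose ha j⟩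
end

section
/- If x_jopt is a job-optimal relaxed unsplit stable assignment, then |x| ≤ |x_jopt| for every relaxed unsplit stable assignment x; that is, the job-optimal assignment maximizes total assigned size among all relaxed unsplit stable assignments. -/
open Finset

variable {J M : Type} [Fintype J] [DecidableEq J] [Fintype M] [DecidableEq M]

/-- a job-optimal relaxed unsplit stable assignment maximizes
the total assigned size among all relaxed unsplit stable assignments. -/
theorem job_optimal_maximizes_size (I : Inst J M) (aj : J → M)
    (hj : JOptimal I aj) (a : J → M) (ha : IsStable I a) :
    totalSize I a ≤ totalSize I aj := by
  apply Finset.sum_le_sum_of_subset_of_nonneg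
  · intro j hj'
    simp only [Finset.mem_filter, Finset.mem_univ, true_and] at hj' ⊢
    intro hmd
    have hpref : I.rankJ j (aj j) ≤ I.rankJ j (a j) := hj.2 a ha j
    have hadj : I.adj j (a j) := ha.1 j
    have := I.md_last j (a j) hadj hj'
    rw [hmd] at hpref
    omega
  · intro j _ _
    exact (I.qJ_pos j).le
end

section
/- A job-optimal relaxed unsplit stable assignment is machine-pessimal: if x_jopt is a job-optimal relaxed unsplit stable assignment and x is any relaxed unsplit stable assignment, then every machine weakly prefers x (in the lexicographic order) to x_jopt. -/
open Finset

variable {J M : Type} [Fintype J] [DecidableEq J] [Fintype M] [DecidableEq M]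

/-- a job-optimal relaxed unsplit stable assignment is
machine-pessimal. -/
theorem job_optimal_is_machine_pessimal (I : Inst J M) (aj : J → M)
    (hj : JOptimal I aj) (a : J → M) (ha : IsStable I a) :
    ∀ m : M, MPrefers I m a aj := by
  classical
  intro m
  by_cases hsame : ∀ j, a j = m ↔ aj j = m
  · exact Or.inl hsame
  · right
    have hD : (Finset.univ.filter
        (fun j => (a j = m ∧ aj j ≠ m) ∨ (aj j = m ∧ a j ≠ m))).Nonempty := by
      push_neg at hsame
      obtain ⟨j, hjne⟩ := hsame
      exact ⟨j, Finset.mem_filter.2 ⟨Finset.mem_univ _, by tauto⟩⟩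
    obtain ⟨j, hjD, hjmin⟩ := Finset.exists_min_image _ (fun j => I.rankM m j) hD
    have hjD' := (Finset.mem_filter.1 hjD).2
    have haj : a j = m := by
      by_contra hne
      have hajm : aj j = m := by tauto
      have hadjm : I.adj j m := hajm ▸ hj.1.1 j
      have hlt : I.rankJ j m < I.rankJ j (a j) := by
        have hle : I.rankJ j (aj j) ≤ I.rankJ j (a j) := hj.2 a ha j
        rw [hajm] at hle
        rcases lt_or_eq_of_le hle with h | h
        · exact h
        · exact absurd (I.rankJ_inj j m (a j) hadjm (ha.1 j) h).symm hne
      have hnb := ha.2.2 j m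
      rw [Blocks] at hnb
      push_neg at hnb
      have hsum := hnb hadjm hne hlt
      set S := Finset.univ.filter
        (fun j' => a j' = m ∧ I.rankM m j' < I.rankM m j) with hS
      set T := Finset.univ.filter (fun j' => aj j' = m) with hT
      have hST : S ⊆ T := by
        intro j' hj'
        simp only [hS, Finset.mem_filter] at hj'
        simp only [hT, Finset.mem_filter]
        refine ⟨Finset.mem_univ _, ?_⟩
        by_contra hne'
        have hmem : j' ∈ Finset.univ.filter
            (fun j => (a j = m ∧ aj j ≠ m) ∨ (aj j = m ∧ a j ≠ m)) :=
          Finset.mem_filter.2 ⟨Finset.mem_univ _, Or.inl ⟨hj'.2.1, hne'⟩⟩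
        exact absurd hj'.2.2 (not_lt.2 (hjmin j' hmem))
      have hjT : j ∈ T := by simp [hT, hajm]
      obtain ⟨js, hjsT, hjsmax⟩ :=
        Finset.exists_max_image T (fun j' => I.rankM m j') ⟨j, hjT⟩
      have hjsm : aj js = m := (Finset.mem_filter.1 hjsT).2
      have hrel := hj.1.2.1 m js hjsm
        (fun j' hj' => hjsmax j' (by simp [hT, hj']))
      have hload : load I aj m = ∑ j' ∈ T, I.qJ j' := by
        rw [hT]; rfl
      have hjmem : ∀ j' ∈ S, I.rankM m j' < I.rankM m j := by
        intro j' h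
        exact ((Finset.mem_filter.1 h).2).2
      have hjnS : j ∉ S := fun h => lt_irrefl _ (hjmem j h)
      rcases eq_or_ne js j with heq | hne2
      · subst heq
        have hsub : S ⊆ T.erase js :=
          fun j' h => Finset.mem_erase.2
            ⟨fun e => hjnS (e ▸ h), hST h⟩
        have h1 : I.qM m ≤ ∑ j' ∈ T.erase js, I.qJ j' :=
          le_trans hsum (Finset.sum_le_sum_of_subset_of_nonneg hsub
            (fun i _ _ => (I.qJ_pos i).le))
        rw [Finset.sum_erase_eq_sub hjsT] at h1
        rw [hload] at hrel
        linarith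
      · by_cases hjsS : js ∈ S
        · exact absurd (hjsmax j hjT) (not_le.2 (hjmem js hjsS))
        · have hsub : insert j S ⊆ T.erase js := by
            intro j' h
            rcases Finset.mem_insert.1 h with h | h
            · subst h; exact Finset.mem_erase.2 ⟨Ne.symm hne2, hjT⟩
            · exact Finset.mem_erase.2 ⟨fun e => hjsS (e ▸ h), hST h⟩
          have h1 := Finset.sum_le_sum_of_subset_of_nonneg hsub
            (fun i _ _ => (I.qJ_pos i).le)
          rw [Finset.sum_insert hjnS] at h1
          rw [Finset.sum_erase_eq_sub hjsT] at h1
          rw [hload] at hrel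
          have hq := I.qJ_pos j
          linarith
    refine ⟨j, haj, ?_, ?_⟩
    · tauto
    · intro j' h
      exact hjmin j' (Finset.mem_filter.2 ⟨Finset.mem_univ _, h⟩)
end

section
/- If an instance admits an unsplit stable assignment (a relaxed unsplit stable assignment x with x(m) ≤ q(m) for every machine m), then every machine-optimal relaxed unsplit stable assignment x_mopt satisfies x_mopt(m) ≤ q(m) for every machine m, i.e., x_mopt is itself an unsplit stable assignment. -/
open Finset

variable {J M : Type} [Fintype J] [DecidableEq J] [Fintype M] [DecidableEq M]

/-- if the instance admits an unsplit stable assignment (no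
machine over capacity), then every machine-optimal relaxed unsplit stable
assignment is itself an unsplit stable assignment. -/
theorem machine_optimal_is_unsplit_stable (I : Inst J M)
    (hex : ∃ a : J → M, IsStable I a ∧ ∀ m, load I a m ≤ I.qM m)
    (am : J → M) (hm : MOptimal I am) :
    ∀ m, load I am m ≤ I.qM m := by
  classical
  obtain ⟨x, hxs, hxf⟩ := hex
  obtain ⟨hys, hopt⟩ := hm
  obtain ⟨hyu, hyr, hyb⟩ := hys
  obtain ⟨hxu, hxr, hxb⟩ := hxs
  by_contra hcon
  push_neg at hcon
  obtain ⟨m₁, hm₁⟩ := hcon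
  -- general: sum of sizes over a set of jobs all assigned (by a) to n is ≤ load
  have hsum_le_load : ∀ (a : J → M) (n : M) (s : Finset J), (∀ j ∈ s, a j = n) →
      ∑ j ∈ s, I.qJ j ≤ load I a n := by
    intro a n s hs
    apply Finset.sum_le_sum_of_subset_of_nonneg
    · intro j hj
      simp only [Finset.mem_filter, Finset.mem_univ, true_and]
      exact hs j hj
    · intro j _ _; exact (I.qJ_pos j).le
  -- the key property P
  set P : M → Prop := fun n => I.qM n ≤ load I am n ∧
      ∃ j₀, x j₀ = n ∧ am j₀ ≠ n ∧ ∀ j', am j' = n → I.rankM n j' < I.rankM n j₀ with hPdef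
  -- Lemma 1: upgrade
  have hP1 : ∀ (n : M) (j₀ : J), x j₀ = n → am j₀ ≠ n →
      I.qM n ≤ ∑ j' ∈ Finset.univ.filter
        (fun j' => am j' = n ∧ I.rankM n j' < I.rankM n j₀), I.qJ j' →
      P n := by
    intro n j₀ hx0 hy0 hsum
    set S : Finset J := Finset.univ.filter
        (fun j' => am j' = n ∧ I.rankM n j' < I.rankM n j₀) with hSdef
    have hSy : ∀ j ∈ S, am j = n := by
      intro j hj
      simp only [hSdef, Finset.mem_filter, Finset.mem_univ, true_and] at hj
      exact hj.1
    have hSne : S.Nonempty := by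
      rw [Finset.nonempty_iff_ne_empty]
      intro h
      rw [h, Finset.sum_empty] at hsum
      linarith [I.qM_pos n]
    obtain ⟨j₁, hj₁⟩ := hSne
    have hyne : (Finset.univ.filter (fun j => am j = n)).Nonempty := by
      refine ⟨j₁, ?_⟩
      simp only [Finset.mem_filter, Finset.mem_univ, true_and]
      exact hSy j₁ hj₁
    obtain ⟨w, hwmem, hwmax⟩ := Finset.exists_max_image _ (fun j => I.rankM n j) hyne
    simp only [Finset.mem_filter, Finset.mem_univ, true_and] at hwmem
    have hwmax' : ∀ j', am j' = n → I.rankM n j' ≤ I.rankM n w := by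
      intro j' hj'
      exact hwmax j' (by simp only [Finset.mem_filter, Finset.mem_univ, true_and]; exact hj')
    have hrelw : load I am n - I.qJ w < I.qM n := hyr n w hwmem hwmax'
    by_cases hcase : I.rankM n w < I.rankM n j₀
    · have hall : ∀ j', am j' = n → I.rankM n j' < I.rankM n j₀ := fun j' hj' =>
        lt_of_le_of_lt (hwmax' j' hj') hcase
      exact ⟨le_trans hsum (hsum_le_load am n S hSy), j₀, hx0, hy0, hall⟩
    · exfalso
      have hwS : w ∉ S := by
        simp only [hSdef, Finset.mem_filter, Finset.mem_univ, true_and]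
        intro h; exact hcase h.2
      have hins : ∑ j ∈ insert w S, I.qJ j ≤ load I am n := by
        apply hsum_le_load
        intro j hj
        rcases Finset.mem_insert.mp hj with h | h
        · rw [h]; exact hwmem
        · exact hSy j h
      rw [Finset.sum_insert hwS] at hins
      linarith
  -- Lemma 2: routing
  have hP2 : ∀ n, P n → ∀ j, am j = n → x j ≠ n →
      I.rankJ j (x j) < I.rankJ j n ∧ P (x j) := by
    intro n hPn j hyj hxj
    obtain ⟨hqload, j₀, hxj₀, hyj₀, hall⟩ := hPn
    have hadj : I.adj j n := hyj ▸ hyu j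
    have hpref : I.rankJ j (x j) < I.rankJ j n := by
      by_contra hnp
      have hner : I.rankJ j n ≠ I.rankJ j (x j) := by
        intro h
        exact hxj ((I.rankJ_inj j n (x j) hadj (hxu j) h).symm)
      have hlt : I.rankJ j n < I.rankJ j (x j) :=
        lt_of_le_of_ne (not_lt.mp hnp) hner
      have hsge : I.qM n ≤ ∑ j' ∈ Finset.univ.filter
          (fun j' => x j' = n ∧ I.rankM n j' < I.rankM n j), I.qJ j' :=
        not_lt.mp (fun h => hxb j n ⟨hadj, hxj, hlt, h⟩)
      set S : Finset J := Finset.univ.filter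
          (fun j' => x j' = n ∧ I.rankM n j' < I.rankM n j) with hSdef
      have hj₀S : j₀ ∉ S := by
        simp only [hSdef, Finset.mem_filter, Finset.mem_univ, true_and]
        intro h
        exact absurd (hall j hyj) (not_lt.mpr h.2.le)
      have hins : ∑ j' ∈ insert j₀ S, I.qJ j' ≤ load I x n := by
        apply hsum_le_load
        intro j' hj'
        rcases Finset.mem_insert.mp hj' with h | h
        · rw [h]; exact hxj₀
        · simp only [hSdef, Finset.mem_filter, Finset.mem_univ, true_and] at h
          exact h.1
      rw [Finset.sum_insert hj₀S] at hins
      have := hxf n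
      linarith [I.qJ_pos j₀]
    constructor
    · exact hpref
    · have hney : am j ≠ x j := by rw [hyj]; exact fun h => hxj h.symm
      have hpref' : I.rankJ j (x j) < I.rankJ j (am j) := by rw [hyj]; exact hpref
      have hsge : I.qM (x j) ≤ ∑ j' ∈ Finset.univ.filter
          (fun j' => am j' = x j ∧ I.rankM (x j) j' < I.rankM (x j) j), I.qJ j' :=
        not_lt.mp (fun h => hyb j (x j) ⟨hxu j, hney, hpref', h⟩)
      exact hP1 (x j) j rfl hney hsge
  -- from optimality: MPrefers at m₁ versus x
  have hMP : MPrefers I m₁ am x := hopt x ⟨hxu, hxr, hxb⟩ m₁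
  rcases hMP with heq | ⟨p, hyp, hxp, hmin⟩
  · have hle : load I am m₁ = load I x m₁ := by
      unfold load
      apply Finset.sum_congr _ (fun _ _ => rfl)
      ext j
      simp only [Finset.mem_filter, Finset.mem_univ, true_and]
      exact heq j
    linarith [hxf m₁]
  · -- pivot p at m₁
    have hadjp : I.adj p m₁ := hyp ▸ hyu p
    -- worst y-job at m₁
    have hyne : (Finset.univ.filter (fun j => am j = m₁)).Nonempty := by
      refine ⟨p, ?_⟩
      simp only [Finset.mem_filter, Finset.mem_univ, true_and]
      exact hyp
    obtain ⟨w, hwmem, hwmax⟩ := Finset.exists_max_image _ (fun j => I.rankM m₁ j) hyne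
    simp only [Finset.mem_filter, Finset.mem_univ, true_and] at hwmem
    have hwmax' : ∀ j', am j' = m₁ → I.rankM m₁ j' ≤ I.rankM m₁ w := by
      intro j' hj'
      exact hwmax j' (by simp only [Finset.mem_filter, Finset.mem_univ, true_and]; exact hj')
    have hrelw : load I am m₁ - I.qJ w < I.qM m₁ := hyr m₁ w hwmem hwmax'
    -- the blocking sum for (p, m₁) against x is small
    have hsmall : ∑ j' ∈ Finset.univ.filter
        (fun j' => x j' = m₁ ∧ I.rankM m₁ j' < I.rankM m₁ p), I.qJ j' < I.qM m₁ := by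
      have hsub : Finset.univ.filter
          (fun j' => x j' = m₁ ∧ I.rankM m₁ j' < I.rankM m₁ p) ⊆
          (Finset.univ.filter (fun j => am j = m₁)).erase w := by
        intro j' hj'
        simp only [Finset.mem_filter, Finset.mem_univ, true_and] at hj'
        have hyj' : am j' = m₁ := by
          by_contra h
          exact absurd (hmin j' (Or.inr ⟨hj'.1, h⟩)) (not_le.mpr hj'.2)
        refine Finset.mem_erase.mpr ⟨?_, ?_⟩
        · intro h
          rw [h] at hj'
          exact absurd (hwmax' p hyp) (not_le.mpr hj'.2)
        · simp only [Finset.mem_filter, Finset.mem_univ, true_and]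
          exact hyj'
      have h1 : ∑ j' ∈ Finset.univ.filter
          (fun j' => x j' = m₁ ∧ I.rankM m₁ j' < I.rankM m₁ p), I.qJ j' ≤
          ∑ j' ∈ (Finset.univ.filter (fun j => am j = m₁)).erase w, I.qJ j' :=
        Finset.sum_le_sum_of_subset_of_nonneg hsub (fun j _ _ => (I.qJ_pos j).le)
      have h2 : ∑ j' ∈ (Finset.univ.filter (fun j => am j = m₁)).erase w, I.qJ j'
          + I.qJ w = load I am m₁ := by
        apply Finset.sum_erase_add
        simp only [Finset.mem_filter, Finset.mem_univ, true_and]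
        exact hwmem
      have : ∑ j' ∈ (Finset.univ.filter (fun j => am j = m₁)).erase w, I.qJ j'
          = load I am m₁ - I.qJ w := by linarith
      linarith
    -- p strictly prefers x p to m₁
    have hnp : ¬ (I.rankJ p m₁ < I.rankJ p (x p)) := by
      intro h
      exact hxb p m₁ ⟨hadjp, hxp, h, hsmall⟩
    have hner : I.rankJ p (x p) ≠ I.rankJ p m₁ := by
      intro h
      exact hxp (I.rankJ_inj p (x p) m₁ (hxu p) hadjp h)
    have hprefp : I.rankJ p (x p) < I.rankJ p m₁ := lt_of_le_of_ne (not_lt.mp hnp) hner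
    -- P (x p)
    have hney : am p ≠ x p := by rw [hyp]; exact fun h => hxp h.symm
    have hprefp' : I.rankJ p (x p) < I.rankJ p (am p) := by rw [hyp]; exact hprefp
    have hsge : I.qM (x p) ≤ ∑ j' ∈ Finset.univ.filter
        (fun j' => am j' = x p ∧ I.rankM (x p) j' < I.rankM (x p) p), I.qJ j' :=
      not_lt.mp (fun h => hyb p (x p) ⟨hxu p, hney, hprefp', h⟩)
    have hPxp : P (x p) := hP1 (x p) p rfl hney hsge
    -- counting over P' := filter P
    set P' : Finset M := Finset.univ.filter P with hP'def
    have hswap : ∀ a : J → M, ∑ n ∈ P', load I a n =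
        ∑ j ∈ Finset.univ.filter (fun j => a j ∈ P'), I.qJ j := by
      intro a
      unfold load
      have h1 : ∀ n ∈ P', ∑ j ∈ Finset.univ.filter (fun j => a j = n), I.qJ j
          = ∑ j : J, if a j = n then I.qJ j else 0 := fun n _ => Finset.sum_filter _ _
      rw [Finset.sum_congr rfl h1, Finset.sum_comm]
      conv_rhs => rw [Finset.sum_filter]
      apply Finset.sum_congr rfl
      intro j _
      exact Finset.sum_ite_eq P' (a j) (fun _ => I.qJ j)
    have hSL_sub_SR : Finset.univ.filter (fun j => am j ∈ P') ⊆
        Finset.univ.filter (fun j => x j ∈ P') := by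
      intro j hj
      simp only [hP'def, Finset.mem_filter, Finset.mem_univ, true_and] at hj ⊢
      by_cases h : x j = am j
      · rw [h]; exact hj
      · exact (hP2 (am j) hj j rfl h).2
    have hLR : ∑ j ∈ Finset.univ.filter (fun j => am j ∈ P'), I.qJ j ≤
        ∑ j ∈ Finset.univ.filter (fun j => x j ∈ P'), I.qJ j :=
      Finset.sum_le_sum_of_subset_of_nonneg hSL_sub_SR (fun j _ _ => (I.qJ_pos j).le)
    have hq_le_y : ∀ n ∈ P', I.qM n ≤ load I am n := by
      intro n hn
      simp only [hP'def, Finset.mem_filter, Finset.mem_univ, true_and] at hn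
      exact hn.1
    -- p ∈ SR, so by sum equality SL = SR, p ∈ SL, so m₁ ∈ P'
    have hpSR : p ∈ Finset.univ.filter (fun j => x j ∈ P') := by
      simp only [hP'def, Finset.mem_filter, Finset.mem_univ, true_and]
      exact hPxp
    have hSets : Finset.univ.filter (fun j => am j ∈ P') =
        Finset.univ.filter (fun j => x j ∈ P') := by
      by_contra hne
      have hss : Finset.univ.filter (fun j => am j ∈ P') ⊂
          Finset.univ.filter (fun j => x j ∈ P') := ssubset_of_subset_of_ne hSL_sub_SR hne
      obtain ⟨i, hiR, hiL⟩ := Finset.exists_of_ssubset hss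
      have : ∑ j ∈ Finset.univ.filter (fun j => am j ∈ P'), I.qJ j <
          ∑ j ∈ Finset.univ.filter (fun j => x j ∈ P'), I.qJ j :=
        Finset.sum_lt_sum_of_subset hSL_sub_SR hiR hiL (I.qJ_pos i)
          (fun j _ _ => (I.qJ_pos j).le)
      -- but also ∑_SR ≤ ∑_P' q ≤ ∑_SL
      have hRL : ∑ j ∈ Finset.univ.filter (fun j => x j ∈ P'), I.qJ j ≤
          ∑ j ∈ Finset.univ.filter (fun j => am j ∈ P'), I.qJ j := by
        rw [← hswap am, ← hswap x]
        apply Finset.sum_le_sum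
        intro n hn
        exact le_trans (hxf n) (hq_le_y n hn)
      linarith
    have hpSL : p ∈ Finset.univ.filter (fun j => am j ∈ P') := hSets ▸ hpSR
    have hm₁P : P m₁ := by
      simp only [hP'def, Finset.mem_filter, Finset.mem_univ, true_and] at hpSL
      rw [hyp] at hpSL
      exact hpSL
    have hm₁P' : m₁ ∈ P' := by
      simp only [hP'def, Finset.mem_filter, Finset.mem_univ, true_and]
      exact hm₁P
    -- final contradiction: strict inequality of sums vs equality
    have hstrict : ∑ n ∈ P', load I x n < ∑ n ∈ P', load I am n :=
      Finset.sum_lt_sum (fun n hn => le_trans (hxf n) (hq_le_y n hn))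
        ⟨m₁, hm₁P', lt_of_le_of_lt (hxf m₁) hm₁⟩
    have heqsum : ∑ n ∈ P', load I x n = ∑ n ∈ P', load I am n := by
      rw [hswap am, hswap x, hSets]
    linarith
end

section
/- If x_mopt is a machine-optimal relaxed unsplit stable assignment and m is a machine with x_mopt(m) < q(m), then x(m) ≤ x_mopt(m) for every relaxed unsplit stable assignment x. -/
open Finset

variable {J M : Type} [Fintype J] [DecidableEq J] [Fintype M] [DecidableEq M]

/-! ### Auxiliary machinery for Statement 9 -/

section Aux

/-- Sum of sizes of jobs assigned to `m` by `x` that `m` strictly prefers to `j`. -/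
def bsum (I : Inst J M) (x : J → M) (m : M) (j : J) : ℝ :=
  ∑ j' ∈ Finset.univ.filter (fun j' => x j' = m ∧ I.rankM m j' < I.rankM m j), I.qJ j'

lemma load_def (I : Inst J M) (x : J → M) (m : M) :
    load I x m = ∑ j' ∈ Finset.univ.filter (fun j' => x j' = m), I.qJ j' := rfl

lemma bsum_le_load (I : Inst J M) (x : J → M) (m : M) (j : J) :
    bsum I x m j ≤ load I x m := by
  apply Finset.sum_le_sum_of_subset_of_nonneg
  · intro c hc
    simp only [Finset.mem_filter, Finset.mem_univ, true_and] at hc ⊢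
    exact hc.1
  · intro i _ _
    exact (I.qJ_pos i).le

lemma rankJ_ne (I : Inst J M) {j : J} {m m' : M} (h1 : I.adj j m) (h2 : I.adj j m')
    (hne : m ≠ m') : I.rankJ j m ≠ I.rankJ j m' :=
  fun h => hne (I.rankJ_inj j m m' h1 h2 h)

lemma noblock_sum (I : Inst J M) {x : J → M} (hx : IsStable I x) {j : J} {m : M}
    (hadj : I.adj j m) (hlt : I.rankJ j m < I.rankJ j (x j)) :
    I.qM m ≤ bsum I x m j := by
  have hne : x j ≠ m := by
    intro h
    rw [h] at hlt
    exact lt_irrefl _ hlt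
  have hnb := hx.2.2 j m
  unfold Blocks at hnb
  push_neg at hnb
  simpa [bsum] using hnb hadj hne hlt

/-- Key lemma: if `x` is stable and `j` strictly prefers adjacent `m` to its
`x`-machine, then every job `x`-assigned to `m` is preferred by `m` to `j`,
and `m` is saturated in `x`. -/
lemma all_beat (I : Inst J M) {x : J → M} (hx : IsStable I x) {j : J} {m : M}
    (hadj : I.adj j m) (hlt : I.rankJ j m < I.rankJ j (x j)) :
    (∀ j', x j' = m → I.rankM m j' < I.rankM m j) ∧ I.qM m ≤ load I x m := by
  have hB := noblock_sum I hx hadj hlt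
  refine ⟨?_, le_trans hB (bsum_le_load I x m j)⟩
  intro j'' hj''
  by_contra hge
  push_neg at hge
  obtain ⟨w, hwmem, hwmax⟩ :=
    Finset.exists_max_image (Finset.univ.filter fun j' => x j' = m) (I.rankM m)
      ⟨j'', by simp [hj'']⟩
  simp only [Finset.mem_filter, Finset.mem_univ, true_and] at hwmem
  have hrel := hx.2.1 m w hwmem (fun j' hj' => hwmax j' (by simp [hj']))
  have hwj : I.rankM m j ≤ I.rankM m w :=
    le_trans hge (hwmax j'' (by simp [hj'']))
  have hsub : (Finset.univ.filter fun j' => x j' = m ∧ I.rankM m j' < I.rankM m j)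
      ⊆ (Finset.univ.filter fun j' => x j' = m).erase w := by
    intro c hc
    simp only [Finset.mem_filter, Finset.mem_univ, true_and] at hc
    refine Finset.mem_erase.mpr ⟨?_, by simp [hc.1]⟩
    rintro rfl
    exact absurd hc.2 (not_lt.mpr hwj)
  have h1 : bsum I x m j ≤ ∑ j' ∈ (Finset.univ.filter fun j' => x j' = m).erase w, I.qJ j' :=
    Finset.sum_le_sum_of_subset_of_nonneg hsub (fun i _ _ => (I.qJ_pos i).le)
  rw [Finset.sum_erase_eq_sub (by simp [hwmem] : w ∈ Finset.univ.filter fun j' => x j' = m)]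
    at h1
  rw [← load_def] at h1
  linarith

/-- Disjointness: no machine is both the `a`-destination of a job strictly
preferring `a` and the `am`-home of a job strictly preferring `am`. -/
lemma star (I : Inst J M) {a am : J → M} (ha : IsStable I a) (ham : IsStable I am)
    {p c : J} (hp : I.rankJ p (a p) < I.rankJ p (am p))
    (hc : I.rankJ c (am c) < I.rankJ c (a c)) (heq : a p = am c) : False := by
  have h1 := (all_beat I ham (ha.1 p) hp).1 c heq.symm
  have h2 := (all_beat I ha (ham.1 c) hc).1 p heq
  rw [heq] at h1
  exact absurd h2 (not_lt.mpr h1.le)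

/-- Coverage: every pair `(j,m)` that `j` strictly prefers to its `x`-machine
is saturated by better jobs in `x`. -/
def Cov (I : Inst J M) (x : J → M) : Prop :=
  ∀ j m, I.adj j m → I.rankJ j m < I.rankJ j (x j) → I.qM m ≤ bsum I x m j

lemma cov_stable (I : Inst J M) {x : J → M} (hu : IsUnsplit I x) (hr : IsRelaxed I x)
    (hc : Cov I x) : IsStable I x := by
  refine ⟨hu, hr, ?_⟩
  intro j m hb
  obtain ⟨h1, _, h3, h4⟩ := hb
  have := hc j m h1 h3
  rw [bsum] at this
  exact absurd h4 (not_lt.mpr this)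

/-- Coverage of the jobwise-worse combination of two stable assignments. -/
lemma cov_worse (I : Inst J M) {a am : J → M} (ha : IsStable I a) (ham : IsStable I am) :
    Cov I (fun j => if I.rankJ j (am j) < I.rankJ j (a j) then a j else am j) := by
  classical
  intro j m hadj hlt
  simp only at hlt
  by_cases hja : I.rankJ j m < I.rankJ j (a j)
  · have hBa := noblock_sum I ha hadj hja
    by_cases hex : ∃ p, a p = m ∧ I.rankJ p (a p) < I.rankJ p (am p) ∧
        I.rankM m p < I.rankM m j
    · obtain ⟨p, hp1, hp2, hp3⟩ := hex
      have hall := all_beat I ham (hp1 ▸ ha.1 p) (hp1 ▸ hp2)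
      have hsub : (Finset.univ.filter fun c => am c = m)
          ⊆ (Finset.univ.filter fun c =>
              (if I.rankJ c (am c) < I.rankJ c (a c) then a c else am c) = m ∧
              I.rankM m c < I.rankM m j) := by
        intro c hcmem
        simp only [Finset.mem_filter, Finset.mem_univ, true_and] at hcmem ⊢
        refine ⟨?_, lt_trans (hall.1 c hcmem) hp3⟩
        by_cases hcq : I.rankJ c (am c) < I.rankJ c (a c)
        · exact (star I ha ham hp2 hcq (hp1.trans hcmem.symm)).elim
        · rw [if_neg hcq]; exact hcmem
      have h2 : load I am m ≤ bsum I _ m j :=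
        Finset.sum_le_sum_of_subset_of_nonneg hsub (fun i _ _ => (I.qJ_pos i).le)
      exact le_trans hall.2 h2
    · push_neg at hex
      have hsub : (Finset.univ.filter fun c => a c = m ∧ I.rankM m c < I.rankM m j)
          ⊆ (Finset.univ.filter fun c =>
              (if I.rankJ c (am c) < I.rankJ c (a c) then a c else am c) = m ∧
              I.rankM m c < I.rankM m j) := by
        intro c hcmem
        simp only [Finset.mem_filter, Finset.mem_univ, true_and] at hcmem ⊢
        obtain ⟨hc1, hc2⟩ := hcmem
        refine ⟨?_, hc2⟩
        by_cases hcq : I.rankJ c (am c) < I.rankJ c (a c)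
        · rw [if_pos hcq]; exact hc1
        · rw [if_neg hcq]
          by_contra hne
          have hnequal : a c ≠ am c := by
            rw [hc1]; exact fun h => hne h.symm
          have hPc : I.rankJ c (a c) < I.rankJ c (am c) :=
            lt_of_le_of_ne (not_lt.mp hcq) (rankJ_ne I (ha.1 c) (ham.1 c) hnequal)
          exact absurd hc2 (not_lt.mpr (hex c hc1 hPc))
      exact le_trans hBa
        (Finset.sum_le_sum_of_subset_of_nonneg hsub (fun i _ _ => (I.qJ_pos i).le))
  · have hjq : ¬ I.rankJ j (am j) < I.rankJ j (a j) := by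
      intro h
      rw [if_pos h] at hlt
      exact hja hlt
    rw [if_neg hjq] at hlt
    have hBam := noblock_sum I ham hadj hlt
    by_cases hex : ∃ c, am c = m ∧ I.rankJ c (am c) < I.rankJ c (a c) ∧
        I.rankM m c < I.rankM m j
    · obtain ⟨c, hc1, hc2, hc3⟩ := hex
      have hall := all_beat I ha (hc1 ▸ ham.1 c) (hc1 ▸ hc2)
      have hsub : (Finset.univ.filter fun p => a p = m)
          ⊆ (Finset.univ.filter fun p =>
              (if I.rankJ p (am p) < I.rankJ p (a p) then a p else am p) = m ∧
              I.rankM m p < I.rankM m j) := by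
        intro p hpmem
        simp only [Finset.mem_filter, Finset.mem_univ, true_and] at hpmem ⊢
        refine ⟨?_, lt_trans (hall.1 p hpmem) hc3⟩
        by_cases hpq : I.rankJ p (am p) < I.rankJ p (a p)
        · rw [if_pos hpq]; exact hpmem
        · rw [if_neg hpq]
          by_contra hne
          have hnequal : a p ≠ am p := by
            rw [hpmem]; exact fun h => hne h.symm
          have hPp : I.rankJ p (a p) < I.rankJ p (am p) :=
            lt_of_le_of_ne (not_lt.mp hpq) (rankJ_ne I (ha.1 p) (ham.1 p) hnequal)
          exact star I ha ham hPp hc2 (hpmem.trans hc1.symm)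
      have h2 : load I a m ≤ bsum I _ m j :=
        Finset.sum_le_sum_of_subset_of_nonneg hsub (fun i _ _ => (I.qJ_pos i).le)
      exact le_trans hall.2 h2
    · push_neg at hex
      have hsub : (Finset.univ.filter fun c => am c = m ∧ I.rankM m c < I.rankM m j)
          ⊆ (Finset.univ.filter fun c =>
              (if I.rankJ c (am c) < I.rankJ c (a c) then a c else am c) = m ∧
              I.rankM m c < I.rankM m j) := by
        intro c hcmem
        simp only [Finset.mem_filter, Finset.mem_univ, true_and] at hcmem ⊢
        obtain ⟨hc1, hc2⟩ := hcmem
        refine ⟨?_, hc2⟩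
        by_cases hcq : I.rankJ c (am c) < I.rankJ c (a c)
        · exact absurd hc2 (not_lt.mpr (hex c hc1 hcq))
        · rw [if_neg hcq]; exact hc1
      exact le_trans hBam
        (Finset.sum_le_sum_of_subset_of_nonneg hsub (fun i _ _ => (I.qJ_pos i).le))

/-- Deferred-acceptance repair: from any unsplit assignment with the coverage
property, there is a stable assignment in which every job is weakly worse off. -/
lemma exists_stable_ge (I : Inst J M) :
    ∀ (n : ℕ) (x0 : J → M),
      (∑ j, ((Finset.univ.sup (I.rankJ j)) + 1 - I.rankJ j (x0 j))) = n →
      IsUnsplit I x0 → Cov I x0 →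
      ∃ xf, IsStable I xf ∧ ∀ j, I.rankJ j (x0 j) ≤ I.rankJ j (xf j) := by
  intro n
  induction n using Nat.strong_induction_on with
  | _ n ih =>
    intro x0 hn hu hc
    by_cases hrel : IsRelaxed I x0
    · exact ⟨x0, cov_stable I hu hrel hc, fun j => le_refl _⟩
    · unfold IsRelaxed at hrel
      push_neg at hrel
      obtain ⟨m0, w, hw0, hwmax, hge⟩ := hrel
      have hadjw : I.adj w m0 := hw0 ▸ hu w
      have hm0ne : m0 ≠ I.md := by
        rintro rfl
        have hle : load I x0 I.md ≤ ∑ j, I.qJ j := by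
          rw [load_def]
          apply Finset.sum_le_sum_of_subset_of_nonneg (Finset.filter_subset _ _)
          intro i _ _
          exact (I.qJ_pos i).le
        have h1 := I.md_cap
        have h2 := I.qJ_pos w
        linarith
      classical
      obtain ⟨m1, hm1S, hm1min⟩ :=
        Finset.exists_min_image
          (Finset.univ.filter fun m => I.adj w m ∧ I.rankJ w m0 < I.rankJ w m)
          (I.rankJ w)
          ⟨I.md, by simp [I.md_adj w, I.md_last w m0 hadjw hm0ne]⟩
      simp only [Finset.mem_filter, Finset.mem_univ, true_and] at hm1S
      obtain ⟨hadj1, hlt1⟩ := hm1S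
      have hm1ne : m1 ≠ m0 := by
        rintro rfl
        exact lt_irrefl _ hlt1
      set x1 : J → M := Function.update x0 w m1 with hx1def
      have hx1w : x1 w = m1 := Function.update_self w m1 x0
      have hx1j : ∀ j, j ≠ w → x1 j = x0 j := fun j hj => Function.update_of_ne hj m1 x0
      have hu1 : IsUnsplit I x1 := by
        intro j
        by_cases hjw : j = w
        · subst hjw; rw [hx1w]; exact hadj1
        · rw [hx1j j hjw]; exact hu j
      -- bsum at m0 after removing w, when all remaining are better than a rank bound
      have herase : ∀ (r : ℕ), I.rankM m0 w < r →
          (Finset.univ.filter fun j' => x1 j' = m0 ∧ I.rankM m0 j' < r)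
            = (Finset.univ.filter fun j' => x0 j' = m0).erase w := by
        intro r hr
        ext c
        simp only [Finset.mem_erase, Finset.mem_filter, Finset.mem_univ, true_and]
        constructor
        · rintro ⟨hc1, _⟩
          have hcw : c ≠ w := by
            rintro rfl
            rw [hx1w] at hc1
            exact hm1ne hc1
          exact ⟨hcw, by rw [← hx1j c hcw]; exact hc1⟩
        · rintro ⟨hcw, hc0⟩
          refine ⟨by rw [hx1j c hcw]; exact hc0, lt_of_le_of_lt (hwmax c hc0) hr⟩
      have heraseW :
          (Finset.univ.filter fun j' => x1 j' = m0 ∧ I.rankM m0 j' < I.rankM m0 w)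
            = (Finset.univ.filter fun j' => x0 j' = m0).erase w := by
        ext c
        simp only [Finset.mem_erase, Finset.mem_filter, Finset.mem_univ, true_and]
        constructor
        · rintro ⟨hc1, _⟩
          have hcw : c ≠ w := by
            rintro rfl
            rw [hx1w] at hc1
            exact hm1ne hc1
          exact ⟨hcw, by rw [← hx1j c hcw]; exact hc1⟩
        · rintro ⟨hcw, hc0⟩
          refine ⟨by rw [hx1j c hcw]; exact hc0, ?_⟩
          have hle := hwmax c hc0
          have hne : I.rankM m0 c ≠ I.rankM m0 w := fun h =>
            hcw (I.rankM_inj m0 c w (hc0 ▸ hu c) hadjw h)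
          exact lt_of_le_of_ne hle hne
      have hsum_erase :
          ∑ j' ∈ (Finset.univ.filter fun j' => x0 j' = m0).erase w, I.qJ j'
            = load I x0 m0 - I.qJ w := by
        rw [Finset.sum_erase_eq_sub (by simp [hw0] :
          w ∈ Finset.univ.filter fun j' => x0 j' = m0), ← load_def]
      have hcov1 : Cov I x1 := by
        intro j m' hadj' hlt'
        by_cases hjw : j = w
        · subst hjw
          rw [hx1w] at hlt'
          have hlem0 : I.rankJ j m' ≤ I.rankJ j m0 := by
            by_contra hgt
            push_neg at hgt
            have hmem : m' ∈ Finset.univ.filter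
                (fun m => I.adj j m ∧ I.rankJ j m0 < I.rankJ j m) := by
              simp [hadj', hgt]
            exact absurd hlt' (not_lt.mpr (hm1min m' hmem))
          rcases lt_or_eq_of_le hlem0 with hltm0 | heqm0
          · have hm'0 : m' ≠ m0 := by
              rintro rfl
              exact lt_irrefl _ hltm0
            have hm'1 : m' ≠ m1 := by
              rintro rfl
              exact lt_irrefl _ hlt'
            have hbase := hc j m' hadj' (by rw [hw0]; exact hltm0)
            have hseteq :
                (Finset.univ.filter fun c => x1 c = m' ∧ I.rankM m' c < I.rankM m' j)
                  = (Finset.univ.filter fun c => x0 c = m' ∧ I.rankM m' c < I.rankM m' j) := by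
              ext c
              simp only [Finset.mem_filter, Finset.mem_univ, true_and]
              constructor
              · rintro ⟨hc1, hc2⟩
                have hcw : c ≠ j := by
                  rintro rfl
                  rw [hx1w] at hc1
                  exact hm'1 hc1.symm
                exact ⟨by rw [← hx1j c hcw]; exact hc1, hc2⟩
              · rintro ⟨hc1, hc2⟩
                have hcw : c ≠ j := by
                  rintro rfl
                  rw [hw0] at hc1
                  exact hm'0 hc1.symm
                exact ⟨by rw [hx1j c hcw]; exact hc1, hc2⟩
            rw [bsum, hseteq]
            rw [bsum] at hbase
            exact hbase
          · have hm'm0 : m' = m0 := I.rankJ_inj j m' m0 hadj' hadjw heqm0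
            subst hm'm0
            rw [bsum, heraseW, hsum_erase]
            exact hge
        · rw [hx1j j hjw] at hlt'
          have hbase := hc j m' hadj' hlt'
          by_cases hm'0 : m' = m0
          · subst hm'0
            by_cases hwj : I.rankM m' w < I.rankM m' j
            · rw [bsum, herase _ hwj, hsum_erase]
              linarith [hge]
            · have hseteq :
                  (Finset.univ.filter fun c => x1 c = m' ∧ I.rankM m' c < I.rankM m' j)
                    = (Finset.univ.filter fun c => x0 c = m' ∧ I.rankM m' c < I.rankM m' j) := by
                ext c
                simp only [Finset.mem_filter, Finset.mem_univ, true_and]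
                constructor
                · rintro ⟨hc1, hc2⟩
                  have hcw : c ≠ w := by
                    rintro rfl
                    rw [hx1w] at hc1
                    exact hm1ne hc1
                  exact ⟨by rw [← hx1j c hcw]; exact hc1, hc2⟩
                · rintro ⟨hc1, hc2⟩
                  have hcw : c ≠ w := by
                    rintro rfl
                    exact hwj hc2
                  exact ⟨by rw [hx1j c hcw]; exact hc1, hc2⟩
              rw [bsum, hseteq]
              rw [bsum] at hbase
              exact hbase
          · by_cases hm'1 : m' = m1
            · subst hm'1
              have hsub :
                  (Finset.univ.filter fun c => x0 c = m' ∧ I.rankM m' c < I.rankM m' j)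
                    ⊆ (Finset.univ.filter fun c => x1 c = m' ∧ I.rankM m' c < I.rankM m' j) := by
                intro c hcmem
                simp only [Finset.mem_filter, Finset.mem_univ, true_and] at hcmem ⊢
                have hcw : c ≠ w := by
                  rintro rfl
                  rw [hw0] at hcmem
                  exact hm1ne hcmem.1.symm
                exact ⟨by rw [hx1j c hcw]; exact hcmem.1, hcmem.2⟩
              refine le_trans hbase ?_
              exact Finset.sum_le_sum_of_subset_of_nonneg hsub (fun i _ _ => (I.qJ_pos i).le)
            · have hseteq :
                  (Finset.univ.filter fun c => x1 c = m' ∧ I.rankM m' c < I.rankM m' j)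
                    = (Finset.univ.filter fun c => x0 c = m' ∧ I.rankM m' c < I.rankM m' j) := by
                ext c
                simp only [Finset.mem_filter, Finset.mem_univ, true_and]
                constructor
                · rintro ⟨hc1, hc2⟩
                  have hcw : c ≠ w := by
                    rintro rfl
                    rw [hx1w] at hc1
                    exact hm'1 hc1.symm
                  exact ⟨by rw [← hx1j c hcw]; exact hc1, hc2⟩
                · rintro ⟨hc1, hc2⟩
                  have hcw : c ≠ w := by
                    rintro rfl
                    rw [hw0] at hc1
                    exact hm'0 hc1.symm
                  exact ⟨by rw [hx1j c hcw]; exact hc1, hc2⟩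
              rw [bsum, hseteq]
              rw [bsum] at hbase
              exact hbase
      have hdec : (∑ j, ((Finset.univ.sup (I.rankJ j)) + 1 - I.rankJ j (x1 j))) < n := by
        rw [← hn]
        apply Finset.sum_lt_sum
        · intro i _
          by_cases hiw : i = w
          · subst hiw
            rw [hx1w, hw0]
            exact Nat.sub_le_sub_left (le_of_lt hlt1) _
          · rw [hx1j i hiw]
        · refine ⟨w, Finset.mem_univ w, ?_⟩
          rw [hx1w, hw0]
          refine Nat.sub_lt_sub_left ?_ hlt1
          have := Finset.le_sup (f := I.rankJ w) (Finset.mem_univ m0)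
          omega
      obtain ⟨xf, hstf, hgef⟩ := ih _ hdec x1 rfl hu1 hcov1
      refine ⟨xf, hstf, fun j => le_trans ?_ (hgef j)⟩
      by_cases hjw : j = w
      · subst hjw
        rw [hx1w, hw0]
        exact le_of_lt hlt1
      · rw [hx1j j hjw]

end Aux

/-- a machine under its capacity in the machine-optimal relaxed
unsplit stable assignment has at least as much allocation there as in any
relaxed unsplit stable assignment. -/
theorem machine_optimal_max_load_on_unsaturated (I : Inst J M) (am : J → M)
    (hm : MOptimal I am) (m : M) (hlt : load I am m < I.qM m)
    (a : J → M) (ha : IsStable I a) :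
    load I a m ≤ load I am m := by
  classical
  by_contra hcon
  push_neg at hcon
  have ham : IsStable I am := hm.1
  -- there is a job assigned to `m` in `a` but not in `am`
  obtain ⟨j0, hj0a, hj0am⟩ : ∃ j0, a j0 = m ∧ am j0 ≠ m := by
    by_contra hno
    push_neg at hno
    have hsub : (Finset.univ.filter fun j => a j = m)
        ⊆ (Finset.univ.filter fun j => am j = m) := by
      intro j hj
      simp only [Finset.mem_filter, Finset.mem_univ, true_and] at hj ⊢
      exact hno j hj
    exact absurd
      (Finset.sum_le_sum_of_subset_of_nonneg hsub (fun i _ _ => (I.qJ_pos i).le))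
      (not_le.mpr hcon)
  have hadj0 : I.adj j0 m := hj0a ▸ ha.1 j0
  -- `j0` strictly prefers `am` to `a`
  have hQ0 : I.rankJ j0 (am j0) < I.rankJ j0 (a j0) := by
    rw [hj0a]
    have hnb := ham.2.2 j0 m
    unfold Blocks at hnb
    push_neg at hnb
    have hsum : bsum I am m j0 < I.qM m :=
      lt_of_le_of_lt (bsum_le_load I am m j0) hlt
    rw [bsum] at hsum
    have h2 : ¬ I.rankJ j0 m < I.rankJ j0 (am j0) := fun hl =>
      absurd hsum (not_lt.mpr (hnb hadj0 hj0am hl))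
    exact lt_of_le_of_ne (not_lt.mp h2) (rankJ_ne I (ham.1 j0) hadj0 hj0am)
  -- the jobwise-worse assignment and its stable repair
  have hux' : IsUnsplit I
      (fun j => if I.rankJ j (am j) < I.rankJ j (a j) then a j else am j) := by
    intro j
    by_cases h : I.rankJ j (am j) < I.rankJ j (a j)
    · simpa [h] using ha.1 j
    · simpa [h] using ham.1 j
  obtain ⟨xf, hstf, hgef⟩ := exists_stable_ge I _
    (fun j => if I.rankJ j (am j) < I.rankJ j (a j) then a j else am j) rfl hux'
    (cov_worse I ha ham)
  -- every job is weakly worse in `xf` than in `am`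
  have hPf : ∀ p, I.rankJ p (am p) ≤ I.rankJ p (xf p) := by
    intro p
    refine le_trans ?_ (hgef p)
    by_cases h : I.rankJ p (am p) < I.rankJ p (a p)
    · simp only [if_pos h]
      exact le_of_lt h
    · simp only [if_neg h]
      exact le_refl _
  -- machine `am j0` cannot weakly prefer `am` to `xf`
  rcases hm.2 xf hstf (am j0) with hiff | ⟨j, hj1, hj2, hjmin⟩
  · have hxfj0 : xf j0 = am j0 := (hiff j0).mp rfl
    have h1 := hgef j0
    rw [if_pos hQ0, hxfj0] at h1
    exact absurd hQ0 (not_lt.mpr h1)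
  · have hadjj : I.adj j (am j0) := hj1 ▸ ham.1 j
    have hlt2 : I.rankJ j (am j0) < I.rankJ j (xf j) := by
      have h1 := hPf j
      rw [hj1] at h1
      exact lt_of_le_of_ne h1 (rankJ_ne I hadjj (hstf.1 j) (Ne.symm hj2))
    have hB := noblock_sum I hstf hadjj hlt2
    obtain ⟨w, hwmem, hwmax⟩ :=
      Finset.exists_max_image (Finset.univ.filter fun j' => am j' = am j0)
        (I.rankM (am j0)) ⟨j, by simp [hj1]⟩
    simp only [Finset.mem_filter, Finset.mem_univ, true_and] at hwmem
    have hrel := ham.2.1 (am j0) w hwmem (fun j' hj' => hwmax j' (by simp [hj']))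
    have hjw' : I.rankM (am j0) j ≤ I.rankM (am j0) w := hwmax j (by simp [hj1])
    have hsub : (Finset.univ.filter fun c =>
          xf c = am j0 ∧ I.rankM (am j0) c < I.rankM (am j0) j)
        ⊆ ((Finset.univ.filter fun c => am c = am j0).erase j).erase w := by
      intro c hcmem
      simp only [Finset.mem_filter, Finset.mem_univ, true_and] at hcmem
      obtain ⟨hc1, hc2⟩ := hcmem
      have hcam : am c = am j0 := by
        by_contra hcam
        exact absurd (hjmin c (Or.inr ⟨hc1, hcam⟩)) (not_le.mpr hc2)
      have hcj : c ≠ j := by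
        rintro rfl
        exact hj2 hc1
      have hcw : c ≠ w := by
        rintro rfl
        exact absurd hc2 (not_lt.mpr hjw')
      exact Finset.mem_erase.mpr ⟨hcw, Finset.mem_erase.mpr ⟨hcj, by simp [hcam]⟩⟩
    by_cases hjweq : j = w
    · subst hjweq
      have hsub2 : (Finset.univ.filter fun c =>
            xf c = am j0 ∧ I.rankM (am j0) c < I.rankM (am j0) j)
          ⊆ (Finset.univ.filter fun c => am c = am j0).erase j := by
        intro c hcmem
        exact Finset.mem_of_mem_erase (hsub hcmem)
      have hsum : bsum I xf (am j0) j
          ≤ ∑ j' ∈ (Finset.univ.filter fun c => am c = am j0).erase j, I.qJ j' :=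
        Finset.sum_le_sum_of_subset_of_nonneg hsub2 (fun i _ _ => (I.qJ_pos i).le)
      rw [Finset.sum_erase_eq_sub (by simp [hj1] :
        j ∈ Finset.univ.filter fun c => am c = am j0), ← load_def] at hsum
      linarith
    · have hwmem2 : w ∈ (Finset.univ.filter fun c => am c = am j0).erase j :=
        Finset.mem_erase.mpr ⟨fun h => hjweq h.symm, by simp [hwmem]⟩
      have hsum : bsum I xf (am j0) j
          ≤ ∑ j' ∈ ((Finset.univ.filter fun c => am c = am j0).erase j).erase w, I.qJ j' :=
        Finset.sum_le_sum_of_subset_of_nonneg hsub (fun i _ _ => (I.qJ_pos i).le)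
      rw [Finset.sum_erase_eq_sub hwmem2,
        Finset.sum_erase_eq_sub (by simp [hj1] :
          j ∈ Finset.univ.filter fun c => am c = am j0), ← load_def] at hsum
      have hqj := I.qJ_pos j
      linarith
end

section
/- A machine that is over-capacitated in a job-optimal relaxed unsplit stable assignment is at least saturated in every relaxed unsplit stable assignment: if x_jopt is job-optimal and x_jopt(m) > q(m) for a machine m, then x(m) ≥ q(m) for every relaxed unsplit stable assignment x. -/
open Finset

variable {J M : Type} [Fintype J] [DecidableEq J] [Fintype M] [DecidableEq M]

/-- a machine over-capacitated in a job-optimal relaxed unsplit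
stable assignment is at least saturated in every relaxed unsplit stable
assignment. -/
theorem overcapacitated_in_jopt_saturated_everywhere (I : Inst J M) (aj : J → M)
    (hj : JOptimal I aj) (m : M) (hgt : I.qM m < load I aj m)
    (a : J → M) (ha : IsStable I a) :
    I.qM m ≤ load I a m := by
  by_contra hlt
  push_neg at hlt
  have hsub : ∀ j, aj j = m → a j = m := by
    intro j hjm
    by_contra hne
    have hadj1 : I.adj j m := hjm ▸ hj.1.1 j
    have hadj2 : I.adj j (a j) := ha.1 j
    have hpref : I.rankJ j m ≤ I.rankJ j (a j) := by
      have := hj.2 a ha j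
      rwa [JPrefers, hjm] at this
    have hstrict : I.rankJ j m < I.rankJ j (a j) := by
      rcases lt_or_eq_of_le hpref with h | h
      · exact h
      · exact absurd (I.rankJ_inj j m (a j) hadj1 hadj2 h).symm hne
    apply ha.2.2 j m
    refine ⟨hadj1, hne, hstrict, lt_of_le_of_lt ?_ hlt⟩
    apply Finset.sum_le_sum_of_subset_of_nonneg
    · intro j' hj'
      simp only [Finset.mem_filter, Finset.mem_univ, true_and] at hj' ⊢
      exact hj'.1
    · intro j' _ _
      exact (I.qJ_pos j').le
  have hle : load I aj m ≤ load I a m := by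
    apply Finset.sum_le_sum_of_subset_of_nonneg
    · intro j' hj'
      simp only [Finset.mem_filter, Finset.mem_univ, true_and] at hj' ⊢
      exact hsub j' hj'
    · intro j' _ _
      exact (I.qJ_pos j').le
  linarith
end

section
/- If a job is assigned to the dummy machine m_d in a job-optimal relaxed unsplit stable assignment, then it is assigned to m_d in every relaxed unsplit stable assignment; and if a job is assigned to a machine other than m_d in a machine-optimal relaxed unsplit stable assignment, then it is assigned to a machine other than m_d in every relaxed unsplit stable assignment. -/
open Finset

variable {J M : Type} [Fintype J] [DecidableEq J] [Fintype M] [DecidableEq M]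

/-!
A job at the dummy machine in the job-optimal assignment has no better stable option, as every other
machine beats `m_d` for it. For the machine side, let `a` be stable with `a j = m_d` while the
machine-optimal `am` has `am j ≠ m_d`. Giving every job the worse of its two machines yields an
assignment without blocking edges: a job the meet keeps out of a machine was kept out by one of the
two stable assignments, by jobs the machine prefers, and those are either kept by the meet or are
themselves kept out by better jobs. Its overloads are repaired by moving a least-preferred job of an
overloaded machine to the best machine that would not reject it; this creates no blocking edge,
never involves `m_d` (which is never overloaded), and moves the job down its list, so it terminates
in a stable assignment. That assignment puts `j` and all of `am`'s dummy jobs on `m_d`, so `m_d`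
strictly prefers it to `am`.
-/

section

variable (I : Inst J M)

def prefixLoad (z : J → M) (m : M) (r : ℕ) : ℝ :=
  ∑ k ∈ univ.filter (fun k => z k = m ∧ I.rankM m k < r), I.qJ k

def NoBlocking (z : J → M) : Prop :=
  ∀ j m, I.adj j m → z j ≠ m → I.rankJ j m < I.rankJ j (z j) →
    I.qM m ≤ prefixLoad I z m (I.rankM m j)

def IsJobMeet (x y z : J → M) : Prop :=
  ∀ k, (z k = x k ∨ z k = y k) ∧
    I.rankJ k (x k) ≤ I.rankJ k (z k) ∧ I.rankJ k (y k) ≤ I.rankJ k (z k)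

theorem exists_isJobMeet (x y : J → M) : ∃ z, IsJobMeet I x y z := by
  refine ⟨fun k => if I.rankJ k (x k) ≤ I.rankJ k (y k) then y k else x k, fun k => ?_⟩
  by_cases h : I.rankJ k (x k) ≤ I.rankJ k (y k)
  · simp only [h, if_true, le_refl, and_true, or_true]
  · simp only [h, if_false, le_refl, true_or, true_and]
    omega

variable {I}

theorem noBlocking_iff {z : J → M} : NoBlocking I z ↔ ∀ j m, ¬ Blocks I z j m := by
  simp only [NoBlocking, Blocks, prefixLoad, not_and, not_lt]

theorem IsStable.noBlocking {z : J → M} (hz : IsStable I z) : NoBlocking I z :=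
  noBlocking_iff.2 hz.2.2

theorem rankJ_lt_of_le_of_ne {j : J} {m m' : M} (hm : I.adj j m) (hm' : I.adj j m')
    (hle : I.rankJ j m ≤ I.rankJ j m') (hne : m ≠ m') : I.rankJ j m < I.rankJ j m' :=
  hle.lt_of_ne fun h => hne (I.rankJ_inj j m m' hm hm' h)

theorem prefixLoad_le_prefixLoad {z z' : J → M} {m : M} {r r' : ℕ}
    (h : ∀ k, z k = m → I.rankM m k < r → z' k = m ∧ I.rankM m k < r') :
    prefixLoad I z m r ≤ prefixLoad I z' m r' :=
  sum_le_sum_of_subset_of_nonneg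
    (fun k hk => by simp only [mem_filter, mem_univ, true_and] at hk ⊢; exact h k hk.1 hk.2)
    (fun k _ _ => (I.qJ_pos k).le)

theorem prefixLoad_mono {z : J → M} {m : M} {r r' : ℕ} (h : r ≤ r') :
    prefixLoad I z m r ≤ prefixLoad I z m r' :=
  prefixLoad_le_prefixLoad fun _ hk hr => ⟨hk, hr.trans_le h⟩

theorem prefixLoad_le_update {z : J → M} {j : J} {m m' : M} {r : ℕ}
    (h : ¬ (z j = m ∧ I.rankM m j < r)) :
    prefixLoad I z m r ≤ prefixLoad I (Function.update z j m') m r :=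
  prefixLoad_le_prefixLoad fun k hk hr => by
    have hkj : k ≠ j := by rintro rfl; exact h ⟨hk, hr⟩
    rw [Function.update_of_ne hkj]
    exact ⟨hk, hr⟩

theorem prefixLoad_of_isWorst {z : J → M} (hz : IsUnsplit I z) {j : J} {m : M} (hj : z j = m)
    (hworst : ∀ k, z k = m → I.rankM m k ≤ I.rankM m j) :
    prefixLoad I z m (I.rankM m j) = load I z m - I.qJ j := by
  have hset : univ.filter (fun k => z k = m ∧ I.rankM m k < I.rankM m j)
      = (univ.filter fun k => z k = m).erase j := by
    ext k
    simp only [mem_filter, mem_univ, true_and, mem_erase]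
    constructor
    · rintro ⟨hk, hlt⟩
      exact ⟨by rintro rfl; exact hlt.false, hk⟩
    · rintro ⟨hkj, hk⟩
      refine ⟨hk, (hworst k hk).lt_of_ne fun h => hkj ?_⟩
      exact I.rankM_inj m k j (hk ▸ hz k) (hj ▸ hz j) h
  rw [prefixLoad, hset, load, sum_erase_eq_sub (by simp [hj])]

theorem load_sub_lt_qM_md (z : J → M) (j : J) : load I z I.md - I.qJ j < I.qM I.md := by
  have hload : load I z I.md ≤ ∑ k, I.qJ k :=
    sum_le_sum_of_subset_of_nonneg (filter_subset _ _) fun k _ _ => (I.qJ_pos k).le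
  linarith [I.md_cap, I.qJ_pos j]

theorem prefixLoad_lt_qM_md (z : J → M) (r : ℕ) : prefixLoad I z I.md r < I.qM I.md :=
  lt_of_le_of_lt
    (sum_le_sum_of_subset_of_nonneg (filter_subset _ _) fun k _ _ => (I.qJ_pos k).le) I.md_cap

theorem NoBlocking.qM_le_prefixLoad_or_exists_dropped {y : J → M} (hy : NoBlocking I y)
    (z : J → M) {d : J} {μ : M} (hadj : I.adj d μ) (hne : y d ≠ μ)
    (hlt : I.rankJ d μ < I.rankJ d (y d)) :
    I.qM μ ≤ prefixLoad I z μ (I.rankM μ d) ∨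
      ∃ k, y k = μ ∧ I.rankM μ k < I.rankM μ d ∧ z k ≠ μ := by
  by_cases hkept : ∀ k, y k = μ → I.rankM μ k < I.rankM μ d → z k = μ
  · exact Or.inl <| (hy d μ hadj hne hlt).trans <|
      prefixLoad_le_prefixLoad fun k hk hr => ⟨hkept k hk hr, hr⟩
  · push Not at hkept
    exact Or.inr hkept

theorem IsJobMeet.symm {x y z : J → M} (h : IsJobMeet I x y z) : IsJobMeet I y x z :=
  fun k => ⟨(h k).1.symm, (h k).2.2, (h k).2.1⟩

theorem IsJobMeet.isUnsplit {x y z : J → M} (h : IsJobMeet I x y z) (hx : IsUnsplit I x)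
    (hy : IsUnsplit I y) : IsUnsplit I z := fun k => by
  rcases (h k).1 with hk | hk <;> rw [hk]
  exacts [hx k, hy k]

theorem IsJobMeet.eq_md_of_left {x y z : J → M} (h : IsJobMeet I x y z) (hy : IsUnsplit I y)
    {k : J} (hk : x k = I.md) : z k = I.md := by
  rcases (h k).1 with hz | hz
  · exact hz.trans hk
  · by_contra hne
    have hle := (h k).2.1
    rw [hk, hz] at hle
    exact (I.md_last k (y k) (hy k) (hz ▸ hne)).not_ge hle

theorem IsJobMeet.le_prefixLoad_or_exists_dropped {x y z : J → M} (h : IsJobMeet I x y z)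
    (hx : IsUnsplit I x) (hy : IsUnsplit I y) (hyb : NoBlocking I y) {d : J} {μ : M}
    (hd : x d = μ) (hzd : z d ≠ μ) :
    I.qM μ ≤ prefixLoad I z μ (I.rankM μ d) ∨
      ∃ k, y k = μ ∧ I.rankM μ k < I.rankM μ d ∧ z k ≠ μ := by
  have hzy : z d = y d := (h d).1.resolve_left (hd ▸ hzd)
  have hadj : I.adj d μ := hd ▸ hx d
  have hyd : y d ≠ μ := hzy ▸ hzd
  have hle : I.rankJ d μ ≤ I.rankJ d (y d) := hd ▸ hzy ▸ (h d).2.1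
  exact hyb.qM_le_prefixLoad_or_exists_dropped z hadj hyd
    (rankJ_lt_of_le_of_ne hadj (hy d) hle hyd.symm)

/-- Induction on `μ`'s rank of `d`: a dropped job is kept out of `μ` by jobs that one of the stable
assignments sends to `μ`, and any of those that the meet drops is a better-ranked dropped job. -/
theorem IsJobMeet.qM_le_prefixLoad_of_dropped {x y z : J → M} (h : IsJobMeet I x y z)
    (hx : IsUnsplit I x) (hy : IsUnsplit I y) (hxb : NoBlocking I x) (hyb : NoBlocking I y)
    (μ : M) (d : J) (hd : x d = μ ∨ y d = μ) (hzd : z d ≠ μ) :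
    I.qM μ ≤ prefixLoad I z μ (I.rankM μ d) := by
  induction hn : I.rankM μ d using Nat.strong_induction_on generalizing d with
  | _ n ih =>
    subst hn
    obtain hle | ⟨k, hk, hkd, hzk⟩ : I.qM μ ≤ prefixLoad I z μ (I.rankM μ d) ∨
        ∃ k, (x k = μ ∨ y k = μ) ∧ I.rankM μ k < I.rankM μ d ∧ z k ≠ μ := by
      rcases hd with hd | hd
      · exact (h.le_prefixLoad_or_exists_dropped hx hy hyb hd hzd).imp_right
          fun ⟨k, hk, hkd, hzk⟩ => ⟨k, Or.inr hk, hkd, hzk⟩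
      · exact (h.symm.le_prefixLoad_or_exists_dropped hy hx hxb hd hzd).imp_right
          fun ⟨k, hk, hkd, hzk⟩ => ⟨k, Or.inl hk, hkd, hzk⟩
    · exact hle
    · exact (ih _ hkd k hk hzk rfl).trans (prefixLoad_mono hkd.le)

theorem IsJobMeet.noBlocking {x y z : J → M} (h : IsJobMeet I x y z)
    (hx : IsUnsplit I x) (hy : IsUnsplit I y) (hxb : NoBlocking I x) (hyb : NoBlocking I y) :
    NoBlocking I z := by
  intro d μ hadj hne hlt
  wlog hzd : z d = x d generalizing x y
  · exact this h.symm hy hx hyb hxb ((h d).1.resolve_left hzd)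
  rw [hzd] at hne hlt
  rcases hxb.qM_le_prefixLoad_or_exists_dropped z hadj hne hlt with hle | ⟨k, hk, hkd, hzk⟩
  · exact hle
  · exact (h.qM_le_prefixLoad_of_dropped hx hy hxb hyb μ k (Or.inl hk) hzk).trans
      (prefixLoad_mono hkd.le)

theorem exists_best_unrejecting (z : J → M) (j : J) :
    ∃ μ, I.adj j μ ∧ prefixLoad I z μ (I.rankM μ j) < I.qM μ ∧
      ∀ μ', I.adj j μ' → I.rankJ j μ' < I.rankJ j μ →
        I.qM μ' ≤ prefixLoad I z μ' (I.rankM μ' j) := by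
  classical
  obtain ⟨μ, hμ, hmin⟩ := exists_min_image
    (univ.filter fun μ => I.adj j μ ∧ prefixLoad I z μ (I.rankM μ j) < I.qM μ) (I.rankJ j)
    ⟨I.md, by simpa using ⟨I.md_adj j, prefixLoad_lt_qM_md z _⟩⟩
  simp only [mem_filter, mem_univ, true_and] at hμ hmin
  refine ⟨μ, hμ.1, hμ.2, fun μ' hadj hlt => ?_⟩
  by_contra hfree
  exact (hmin μ' ⟨hadj, not_le.1 hfree⟩).not_gt hlt

theorem NoBlocking.update {z : J → M} (hz : NoBlocking I z) {j : J} {m μ' : M} (hj : z j = m)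
    (hfull : I.qM m ≤ prefixLoad I z m (I.rankM m j))
    (hbest : ∀ μ, I.adj j μ → I.rankJ j μ < I.rankJ j μ' →
      I.qM μ ≤ prefixLoad I z μ (I.rankM μ j)) :
    NoBlocking I (Function.update z j μ') := by
  intro d μ hadj hne hlt
  by_cases hbehind : μ = m ∧ I.rankM m j ≤ I.rankM m d
  · obtain ⟨rfl, hjd⟩ := hbehind
    exact hfull.trans <| (prefixLoad_le_update (lt_irrefl _ ·.2)).trans (prefixLoad_mono hjd)
  by_cases hdj : d = j
  · subst hdj
    rw [Function.update_self] at hlt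
    have hμm : μ ≠ m := fun h => hbehind ⟨h, le_rfl⟩
    exact (hbest μ hadj hlt).trans (prefixLoad_le_update fun h => hμm (hj ▸ h.1).symm)
  · rw [Function.update_of_ne hdj] at hne hlt
    refine (hz d μ hadj hne hlt).trans (prefixLoad_le_update fun h => hbehind ?_)
    exact ⟨hj ▸ h.1.symm, hj ▸ h.1 ▸ h.2.le⟩

/-- One repair step: a least-preferred job of an overloaded machine moves to the best machine that
does not reject it, strictly down its own list. -/
theorem exists_repair_step {z : J → M} (hz : IsUnsplit I z) (hzb : NoBlocking I z)
    (hrel : ¬ IsRelaxed I z) :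
    ∃ z', IsUnsplit I z' ∧ NoBlocking I z' ∧ (∀ e, z e = I.md → z' e = I.md) ∧
      ∑ k, I.rankJ k (z k) < ∑ k, I.rankJ k (z' k) := by
  simp only [IsRelaxed, not_forall, not_lt] at hrel
  obtain ⟨m, j, hj, hworst, hload⟩ := hrel
  have hfull : I.qM m ≤ prefixLoad I z m (I.rankM m j) := by
    rwa [prefixLoad_of_isWorst hz hj hworst]
  have hm : m ≠ I.md := by
    rintro rfl
    exact (load_sub_lt_qM_md z j).not_ge hload
  obtain ⟨μ, hadj, hfree, hbest⟩ := exists_best_unrejecting z j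
  have hμm : μ ≠ m := by rintro rfl; exact hfree.not_ge hfull
  have hdown : I.rankJ j m < I.rankJ j μ := by
    refine rankJ_lt_of_le_of_ne (hj ▸ hz j) hadj (not_lt.1 fun hup => ?_) hμm.symm
    exact hfree.not_ge (hzb j μ hadj (hj ▸ hμm.symm) (hj ▸ hup))
  refine ⟨Function.update z j μ, fun k => ?_, hzb.update hj hfull hbest, fun e he => ?_, ?_⟩
  · by_cases hk : k = j
    · subst hk; simpa using hadj
    · simpa [Function.update_of_ne hk] using hz k
  · rw [Function.update_of_ne (by rintro rfl; exact hm (hj.symm.trans he))]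
    exact he
  · refine sum_lt_sum (fun k _ => ?_) ⟨j, mem_univ j, by simpa [hj] using hdown⟩
    by_cases hk : k = j
    · subst hk; simpa [hj] using hdown.le
    · simp [Function.update_of_ne hk]

/-- A repair step raises the total job rank, so a maximizer of it over the finitely many
blocking-free assignments is relaxed. -/
theorem exists_isStable_of_noBlocking {z : J → M} (hz : IsUnsplit I z) (hzb : NoBlocking I z) :
    ∃ z', IsStable I z' ∧ ∀ e, z e = I.md → z' e = I.md := by
  let S : Set (J → M) :=
    {w | IsUnsplit I w ∧ NoBlocking I w ∧ ∀ e, z e = I.md → w e = I.md}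
  obtain ⟨w, ⟨hw, hwb, hwmd⟩, hmax⟩ :=
    S.exists_max_image (fun w => ∑ k, I.rankJ k (w k)) S.toFinite ⟨z, hz, hzb, fun _ h => h⟩
  by_cases hrel : IsRelaxed I w
  · exact ⟨w, ⟨hw, hrel, noBlocking_iff.1 hwb⟩, hwmd⟩
  · obtain ⟨w', hw', hw'b, hw'md, hlt⟩ := exists_repair_step hw hwb hrel
    exact absurd (hmax w' ⟨hw', hw'b, fun e he => hw'md e (hwmd e he)⟩) hlt.not_ge

end

/-- a job assigned to the dummy machine in a job-optimal
relaxed unsplit stable assignment is assigned to the dummy machine in every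
relaxed unsplit stable assignment; a job assigned to a real machine in a
machine-optimal relaxed unsplit stable assignment is assigned to a real
machine in every relaxed unsplit stable assignment. -/
theorem dummy_assignment_invariance (I : Inst J M)
    (aj : J → M) (hj : JOptimal I aj)
    (am : J → M) (hm : MOptimal I am)
    (a : J → M) (ha : IsStable I a) :
    (∀ j, aj j = I.md → a j = I.md) ∧ (∀ j, am j ≠ I.md → a j ≠ I.md) := by
  refine ⟨fun j hj_md => ?_, fun j hj_md hj_a => ?_⟩
  · by_contra hne
    have hpref : I.rankJ j (aj j) ≤ I.rankJ j (a j) := hj.2 a ha j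
    rw [hj_md] at hpref
    exact (I.md_last j (a j) (ha.1 j) hne).not_ge hpref
  · obtain ⟨z, hz⟩ := exists_isJobMeet I am a
    obtain ⟨z', hz', hmd⟩ := exists_isStable_of_noBlocking (hz.isUnsplit hm.1.1 ha.1)
      (hz.noBlocking hm.1.1 ha.1 hm.1.noBlocking ha.noBlocking)
    rcases hm.2 z' hz' I.md with hsame | ⟨k, hk, hk', -⟩
    · exact hj_md ((hsame j).2 (hmd j (hz.symm.eq_md_of_left hm.1.1 hj_a)))
    · exact hk' (hmd k (hz.eq_md_of_left ha.1 hk))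
end

section
/- In a fractional stable allocation x in which every job is fully allocated, consider a machine m and a job j such that j is not fully allocated to its most-preferred edge, the edge jm is a proposal edge of j (j strictly prefers jm to its refusal edge r(j)), and x(jm) > 0. Then jm is the unique proposal edge into m with positive allocation, and every other edge j'm with x(j'm) > 0 is strictly preferred by m to jm. -/
open Finset

variable {J M : Type} [Fintype J] [DecidableEq J] [Fintype M] [DecidableEq M]

/-- `x(j)`: total allocation of job `j`. -/
def loadJ (I : Inst J M) (x : J → M → ℝ) (j : J) : ℝ := ∑ m, x j m

/-- `x(m)`: total allocation on machine `m`. -/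
def loadM (I : Inst J M) (x : J → M → ℝ) (m : M) : ℝ := ∑ j, x j m

/-- A (fractional) stable allocation: a feasible allocation supported on the
edges such that for every edge `jm` with `x(jm) < q(j)`, either `j` is fully
allocated on edges weakly preferred to `jm`, or `m` is fully allocated on
edges weakly preferred to `jm`. -/
def FracStable (I : Inst J M) (x : J → M → ℝ) : Prop :=
  (∀ j m, ¬ I.adj j m → x j m = 0) ∧
  (∀ j m, 0 ≤ x j m ∧ x j m ≤ I.qJ j) ∧
  (∀ j, loadJ I x j ≤ I.qJ j) ∧
  (∀ m, loadM I x m ≤ I.qM m) ∧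
  (∀ j m, I.adj j m → x j m < I.qJ j →
    (∑ m' ∈ Finset.univ.filter (fun m' => I.rankJ j m' ≤ I.rankJ j m), x j m') = I.qJ j ∨
    (∑ j' ∈ Finset.univ.filter (fun j' => I.rankM m j' ≤ I.rankM m j), x j' m) = I.qM m)

/-- Core lemma: if `jm` is a positive proposal edge of `j`, then every job
ranked strictly worse than `j` by `m` gets zero allocation on `m`. -/
lemma core_zero (I : Inst J M) (x : J → M → ℝ)
    (hx : FracStable I x) (hfull : ∀ j, loadJ I x j = I.qJ j)
    (j : J) (m mr : M)
    (hmr_pos : 0 < x j mr)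
    (hadj : I.adj j m) (hprop : I.rankJ j m < I.rankJ j mr) :
    ∀ j'', I.rankM m j < I.rankM m j'' → x j'' m = 0 := by
  obtain ⟨hsupp, hbound, hloadJ, hloadM, hstab⟩ := hx
  have hlt : x j m < I.qJ j := by
    have hne : m ≠ mr := fun h => by simp [h] at hprop
    have h1 : ∑ m' ∈ ({m, mr} : Finset M), x j m' ≤ ∑ m', x j m' :=
      Finset.sum_le_sum_of_subset_of_nonneg (Finset.subset_univ _)
        (fun i _ _ => (hbound j i).1)
    rw [Finset.sum_pair hne] at h1
    have := hfull j
    rw [loadJ] at this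
    linarith
  rcases hstab j m hadj hlt with hJ | hM
  · exfalso
    have hmem : mr ∉ Finset.univ.filter (fun m' => I.rankJ j m' ≤ I.rankJ j m) := by
      simp only [Finset.mem_filter, Finset.mem_univ, true_and]
      omega
    have hsub : x j mr + ∑ m' ∈ Finset.univ.filter
        (fun m' => I.rankJ j m' ≤ I.rankJ j m), x j m' ≤ ∑ m', x j m' := by
      have h2 := Finset.sum_le_sum_of_subset_of_nonneg
        (Finset.subset_univ
          (insert mr (Finset.univ.filter (fun m' => I.rankJ j m' ≤ I.rankJ j m))))
        (fun i _ _ => (hbound j i).1)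
      rwa [Finset.sum_insert hmem] at h2
    have := hfull j
    rw [loadJ] at this
    linarith
  · intro j'' hrk
    have hsplit := Finset.sum_filter_add_sum_filter_not Finset.univ
      (fun j' => I.rankM m j' ≤ I.rankM m j) (fun j' => x j' m)
    have hload := hloadM m
    rw [loadM] at hload
    have hrest : ∑ j' ∈ Finset.univ.filter (fun j' => ¬ I.rankM m j' ≤ I.rankM m j),
        x j' m ≤ 0 := by linarith
    have hzero := (Finset.sum_eq_zero_iff_of_nonneg
      (fun i _ => (hbound i m).1)).mp (le_antisymm hrest
        (Finset.sum_nonneg fun i _ => (hbound i m).1))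
    exact hzero j'' (by simp only [Finset.mem_filter, Finset.mem_univ, true_and]; omega)

/-- in a fractional stable allocation in which every job is
fully allocated, if `jm` is a proposal edge of `j` (strictly preferred by `j`
to `j`'s refusal edge `mr`, its worst positive edge) with `x(jm) > 0`, then
`jm` is the unique positive proposal edge into `m`, and every other positive
edge into `m` is strictly preferred by `m` to `jm`. -/
theorem positive_proposal_edge_structure (I : Inst J M) (x : J → M → ℝ)
    (hx : FracStable I x) (hfull : ∀ j, loadJ I x j = I.qJ j)
    (j : J) (m mr : M)
    (hmr_pos : 0 < x j mr)
    (hmr_worst : ∀ m', 0 < x j m' → I.rankJ j m' ≤ I.rankJ j mr)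
    (hadj : I.adj j m) (hprop : I.rankJ j m < I.rankJ j mr) (hpos : 0 < x j m) :
    (∀ j' mr', j' ≠ j → 0 < x j' mr' →
      (∀ m'', 0 < x j' m'' → I.rankJ j' m'' ≤ I.rankJ j' mr') →
      I.adj j' m → I.rankJ j' m < I.rankJ j' mr' → ¬ (0 < x j' m)) ∧
    (∀ j', j' ≠ j → 0 < x j' m → I.rankM m j' < I.rankM m j) := by
  have h2 : ∀ j', j' ≠ j → 0 < x j' m → I.rankM m j' < I.rankM m j := by
    intro j' hne hpos'
    have hadj' : I.adj j' m := by
      by_contra hna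
      rw [hx.1 j' m hna] at hpos'
      exact lt_irrefl 0 hpos'
    rcases lt_trichotomy (I.rankM m j') (I.rankM m j) with h | h | h
    · exact h
    · exact absurd (I.rankM_inj m j' j hadj' hadj h) hne
    · exact absurd (core_zero I x hx hfull j m mr hmr_pos hadj hprop j' h)
        (ne_of_gt hpos')
  refine ⟨?_, h2⟩
  intro j' mr' hne hmr'pos _ hadj' hprop' hposm
  have := core_zero I x hx hfull j' m mr' hmr'pos hadj' hprop' j (h2 j' hne hposm)
  exact absurd this (ne_of_gt hpos)
end
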